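/- arXiv:2408.03317 — 8 statements merged into one kernel-verified Lean document; each statement's English description precedes it below -/
import Mathlib

section
/- If P and Q are orthogonal projections on a Hilbert space with ‖P − Q‖ < 1, and U is the partial isometry in the polar decomposition of QP, then ‖U − P‖ < √2. -/
open ContinuousLinearMap

local notation "⟪" x ", " y "⟫" => @inner ℂ _ _ x y

/-- For a self-adjoint continuous linear map, the inner product can be moved across. -/
private lemma aux_sadj {H : Type*} [NormedAddCommGroup H] [InnerProductSpace ℂ H]
    [CompleteSpace H] (T : H →L[ℂ] H) (h : adjoint T = T) (a b : H) :
    ⟪T a, b⟫ = ⟪a, T b⟫ := by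
  conv_lhs => rw [← h]
  exact adjoint_inner_left T b a

/-- A self-adjoint idempotent acts as the identity on vectors orthogonal to its kernel. -/
private lemma aux_id_on_ortho {H : Type*} [NormedAddCommGroup H] [InnerProductSpace ℂ H]
    [CompleteSpace H] (E : H →L[ℂ] H) (hsa : adjoint E = E) (hidem : ∀ x, E (E x) = E x)
    (z : H) (hz : ∀ k, E k = 0 → ⟪z, k⟫ = 0) : E z = z := by
  have hk : E (z - E z) = 0 := by simp [map_sub, hidem]
  have h1 : ⟪z - E z, z⟫ = 0 := by
    have := hz (z - E z) hk
    rw [← inner_conj_symm, this, map_zero]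
  have h2 : ⟪z - E z, E z⟫ = 0 := by
    calc ⟪z - E z, E z⟫ = ⟪E (z - E z), z⟫ := (aux_sadj E hsa _ _).symm
    _ = 0 := by rw [hk, inner_zero_left]
  have h3 : ⟪z - E z, z - E z⟫ = 0 := by
    rw [inner_sub_right, h1, h2, sub_zero]
  have h4 := inner_self_eq_zero.mp h3
  rw [sub_eq_zero] at h4
  exact h4.symm

set_option maxHeartbeats 2000000 in
/-- If `P` and `Q` are orthogonal projections with `‖P - Q‖ < 1` and `U` is the partial
isometry in the polar decomposition `QP = U (PQP)^{1/2}` (with `R = (PQP)^{1/2}` the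
positive square root and `U` having initial space `(ker R)ᗮ`), then `‖U - P‖ < √2`. -/
theorem stmt1 {H : Type*} [NormedAddCommGroup H] [InnerProductSpace ℂ H]
    [CompleteSpace H] (P Q U R : H →L[ℂ] H)
    (hPsa : IsSelfAdjoint P) (hP2 : P ∘L P = P)
    (hQsa : IsSelfAdjoint Q) (hQ2 : Q ∘L Q = Q)
    (hPQ : ‖P - Q‖ < 1)
    (hRpos : R.IsPositive) (hR2 : R ∘L R = P ∘L Q ∘L P)
    (hUpi : U ∘L adjoint U ∘L U = U)
    (hker : LinearMap.ker (U : H →ₗ[ℂ] H) = LinearMap.ker (R : H →ₗ[ℂ] H))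
    (hpolar : Q ∘L P = U ∘L R) :
    ‖U - P‖ < Real.sqrt 2 := by
  have hPadj : adjoint P = P := isSelfAdjoint_iff'.mp hPsa
  have hQadj : adjoint Q = Q := isSelfAdjoint_iff'.mp hQsa
  have hRadj : adjoint R = R := isSelfAdjoint_iff'.mp hRpos.isSelfAdjoint
  have hPs := aux_sadj P hPadj
  have hQs := aux_sadj Q hQadj
  have hRs := aux_sadj R hRadj
  have hPid : ∀ x, P (P x) = P x := fun x => congrFun (congrArg DFunLike.coe hP2) x
  have hQid : ∀ x, Q (Q x) = Q x := fun x => congrFun (congrArg DFunLike.coe hQ2) x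
  set ε : ℝ := 1 - ‖P - Q‖ with hεdef
  clear_value ε
  have hε0 : 0 < ε := by simp only [hεdef]; linarith
  have hε1 : ε ≤ 1 := by have := norm_nonneg (P - Q); simp only [hεdef]; linarith
  -- norms of projections
  have proj_norm : ∀ (T : H →L[ℂ] H), adjoint T = T → (∀ x, T (T x) = T x) →
      ∀ x, ‖T x‖ ≤ ‖x‖ := by
    intro T hsa hid x
    have h1 : ⟪T x, T x⟫ = ⟪T x, x⟫ := by
      calc ⟪T x, T x⟫ = ⟪T (T x), x⟫ := (aux_sadj T hsa _ _).symm
      _ = ⟪T x, x⟫ := by rw [hid]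
    have h2 : ‖T x‖ ^ 2 = RCLike.re ⟪T x, x⟫ := by
      rw [← h1, inner_self_eq_norm_sq (𝕜 := ℂ)]
    have h3 : RCLike.re ⟪T x, x⟫ ≤ ‖T x‖ * ‖x‖ := by
      refine le_trans (RCLike.re_le_norm _) ?_
      exact norm_inner_le_norm (𝕜 := ℂ) (T x) x
    nlinarith [norm_nonneg (T x), norm_nonneg x]
  have hPnorm := proj_norm P hPadj hPid
  have hQnorm := proj_norm Q hQadj hQid
  -- ‖Rx‖ = ‖Q(Px)‖
  have hRQP : ∀ x, ‖R x‖ = ‖Q (P x)‖ := by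
    intro x
    have h1 : ⟪R x, R x⟫ = ⟪Q (P x), Q (P x)⟫ := by
      calc ⟪R x, R x⟫ = ⟪R (R x), x⟫ := (hRs _ _).symm
      _ = ⟪(R ∘L R) x, x⟫ := by rw [comp_apply]
      _ = ⟪P (Q (P x)), x⟫ := by rw [hR2]; rw [comp_apply, comp_apply]
      _ = ⟪Q (P x), P x⟫ := hPs _ _
      _ = ⟪Q (Q (P x)), P x⟫ := by rw [hQid]
      _ = ⟪Q (P x), Q (P x)⟫ := by rw [hQs]
    have h2 : ‖R x‖ ^ 2 = ‖Q (P x)‖ ^ 2 := by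
      rw [← inner_self_eq_norm_sq (𝕜 := ℂ), ← inner_self_eq_norm_sq (𝕜 := ℂ), h1]
    calc ‖R x‖ = Real.sqrt (‖R x‖ ^ 2) := (Real.sqrt_sq (norm_nonneg _)).symm
    _ = Real.sqrt (‖Q (P x)‖ ^ 2) := by rw [h2]
    _ = ‖Q (P x)‖ := Real.sqrt_sq (norm_nonneg _)
  -- lower bound ε‖Px‖ ≤ ‖Q(Px)‖
  have hlow : ∀ x, ε * ‖P x‖ ≤ ‖Q (P x)‖ := by
    intro x
    have h1 : ‖P x - Q (P x)‖ ≤ ‖P - Q‖ * ‖P x‖ := by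
      have e : (P - Q) (P x) = P x - Q (P x) := by rw [sub_apply, hPid]
      calc ‖P x - Q (P x)‖ = ‖(P - Q) (P x)‖ := by rw [e]
      _ ≤ ‖P - Q‖ * ‖P x‖ := le_opNorm _ _
    have h2 : ‖P x‖ ≤ ‖P x - Q (P x)‖ + ‖Q (P x)‖ := by
      calc ‖P x‖ = ‖P x - Q (P x) + Q (P x)‖ := by rw [sub_add_cancel]
      _ ≤ ‖P x - Q (P x)‖ + ‖Q (P x)‖ := norm_add_le _ _
    simp only [hεdef]
    nlinarith [norm_nonneg (P x)]
  -- kernels coincide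
  have hkerRP : ∀ x, R x = 0 ↔ P x = 0 := by
    intro x
    constructor
    · intro h
      have hq : ‖Q (P x)‖ = 0 := by rw [← hRQP, h, norm_zero]
      have h2 := hlow x
      rw [hq] at h2
      have : ‖P x‖ = 0 := le_antisymm (by nlinarith) (norm_nonneg _)
      exact norm_eq_zero.mp this
    · intro h
      have : ‖R x‖ = 0 := by rw [hRQP, h, map_zero, norm_zero]
      exact norm_eq_zero.mp this
  have hkerU : ∀ x, U x = 0 ↔ R x = 0 := by
    intro x
    constructor
    · intro h
      have hx : x ∈ LinearMap.ker (U : H →ₗ[ℂ] H) := h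
      rw [hker] at hx
      exact hx
    · intro h
      have hx : x ∈ LinearMap.ker (R : H →ₗ[ℂ] H) := h
      rw [← hker] at hx
      exact hx
  have hUofker : ∀ x, P x = 0 → U x = 0 := fun x h => (hkerU x).mpr ((hkerRP x).mpr h)
  -- U(Px) = Ux, R(Px) = Rx
  have hUP : ∀ x, U (P x) = U x := by
    intro x
    have h : P (x - P x) = 0 := by rw [map_sub, hPid, sub_self]
    have h2 := hUofker (x - P x) h
    rw [map_sub, sub_eq_zero] at h2
    exact h2.symm
  have hRP : ∀ x, R (P x) = R x := by
    intro x
    have h : P (x - P x) = 0 := by rw [map_sub, hPid, sub_self]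
    have h2 := (hkerRP (x - P x)).mpr h
    rw [map_sub, sub_eq_zero] at h2
    exact h2.symm
  -- Px is orthogonal to ker P
  have hPorth : ∀ x k, P k = 0 → ⟪P x, k⟫ = 0 := by
    intro x k hk
    calc ⟪P x, k⟫ = ⟪x, P k⟫ := hPs _ _
    _ = 0 := by rw [hk, inner_zero_right]
  -- U†U = P
  have hUUP : ∀ x, adjoint U (U x) = P x := by
    intro x
    set E : H →L[ℂ] H := adjoint U ∘L U with hEdef
    have hEsa : adjoint E = E := by
      rw [hEdef, adjoint_comp, adjoint_adjoint]
    have hEid : ∀ y, E (E y) = E y := by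
      intro y
      have h : U (adjoint U (U y)) = U y := by
        have := congrFun (congrArg DFunLike.coe hUpi) y
        simpa [comp_apply, hEdef] using this
      simp only [hEdef, comp_apply]
      rw [h]
    have hEker : ∀ k, E k = 0 → U k = 0 := by
      intro k hk
      have h1 : ⟪E k, k⟫ = 0 := by rw [hk, inner_zero_left]
      have h2 : ⟪E k, k⟫ = ⟪U k, U k⟫ := by
        simp only [hEdef, comp_apply]
        rw [adjoint_inner_left]
      rw [h2] at h1
      exact inner_self_eq_zero.mp h1
    have hPEz : E (P x) = P x := by
      refine aux_id_on_ortho E hEsa hEid (P x) ?_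
      intro k hk
      have hUk := hEker k hk
      have hPk : P k = 0 := (hkerRP k).mp ((hkerU k).mp hUk)
      exact hPorth x k hPk
    calc adjoint U (U x) = adjoint U (U (P x)) := by rw [hUP]
    _ = E (P x) := by simp only [hEdef, comp_apply]
    _ = P x := hPEz
  -- PU = R
  have hPU : ∀ x, P (U x) = R x := by
    intro x
    set T : H →L[ℂ] H := P ∘L U - R with hTdef
    have hTR : ∀ y, T (R y) = 0 := by
      intro y
      have h1 : U (R y) = Q (P y) := by
        have := congrFun (congrArg DFunLike.coe hpolar) y
        simpa [comp_apply] using this.symm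
      have h2 : P (Q (P y)) = R (R y) := by
        have := congrFun (congrArg DFunLike.coe hR2) y
        simpa [comp_apply] using this.symm
      simp only [hTdef, sub_apply, comp_apply]
      rw [h1, h2, sub_self]
    have hcl : ∀ z, z ∈ (LinearMap.range (R : H →ₗ[ℂ] H)).topologicalClosure → T z = 0 := by
      intro z hz
      have hle : (LinearMap.range (R : H →ₗ[ℂ] H)) ≤ LinearMap.ker (T : H →ₗ[ℂ] H) := by
        rintro _ ⟨y, rfl⟩
        exact hTR y
      have hclosed : IsClosed ((LinearMap.ker (T : H →ₗ[ℂ] H) : Submodule ℂ H) : Set H) :=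
        ContinuousLinearMap.isClosed_ker T
      have := Submodule.topologicalClosure_minimal (s := LinearMap.range (R : H →ₗ[ℂ] H))
        hle hclosed
      exact this hz
    have hPmem : P x ∈ (LinearMap.range (R : H →ₗ[ℂ] H)).topologicalClosure := by
      rw [← Submodule.orthogonal_orthogonal_eq_closure]
      intro u hu
      have hRu : R u = 0 := by
        have h1 : ∀ y, ⟪R y, u⟫ = 0 := fun y => hu (R y) ⟨y, rfl⟩
        have h2 : ∀ y, ⟪R u, y⟫ = 0 := by
          intro y
          calc ⟪R u, y⟫ = ⟪u, R y⟫ := hRs _ _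
          _ = (starRingEnd ℂ) ⟪R y, u⟫ := (inner_conj_symm _ _).symm
          _ = 0 := by rw [h1, map_zero]
        exact inner_self_eq_zero.mp (h2 (R u))
      have hPu : P u = 0 := (hkerRP u).mp hRu
      calc ⟪u, P x⟫ = (starRingEnd ℂ) ⟪P x, u⟫ := (inner_conj_symm _ _).symm
      _ = 0 := by rw [hPorth x u hPu, map_zero]
    have hTPx : T (P x) = 0 := hcl (P x) hPmem
    simp only [hTdef, sub_apply, comp_apply] at hTPx
    rw [sub_eq_zero] at hTPx
    rw [← hUP x, ← hRP x]
    exact hTPx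
  -- ‖Rx‖ ≤ ‖x‖
  have hRnorm : ∀ x, ‖R x‖ ≤ ‖x‖ := by
    intro x
    rw [hRQP]
    exact le_trans (hQnorm (P x)) (hPnorm x)
  -- ‖Rx‖² ≤ re⟪Rx, x⟫
  have hRsq : ∀ x, ‖R x‖ ^ 2 ≤ RCLike.re ⟪R x, x⟫ := by
    intro x
    have hpos := hRpos.2 (x - R x)
    rw [reApplyInnerSelf_apply] at hpos
    have hexp : R (x - R x) = R x - R (R x) := map_sub R x (R x)
    rw [hexp] at hpos
    simp only [inner_sub_left, inner_sub_right, map_sub] at hpos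
    have hb : RCLike.re ⟪R x, R x⟫ = ‖R x‖ ^ 2 := inner_self_eq_norm_sq (R x)
    have hb2 : RCLike.re ⟪R (R x), x⟫ = ‖R x‖ ^ 2 := by
      have h : ⟪R (R x), x⟫ = ⟪R x, R x⟫ := hRs _ _
      rw [h, hb]
    have hc : RCLike.re ⟪R (R x), R x⟫ ≤ ‖R x‖ ^ 2 := by
      refine le_trans (RCLike.re_le_norm _) ?_
      refine le_trans (norm_inner_le_norm _ _) ?_
      have := hRnorm (R x)
      nlinarith [norm_nonneg (R x)]
    linarith [hpos]
  -- key pointwise bound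
  have key : ∀ x, ‖(U - P) x‖ ^ 2 ≤ (2 - 2 * ε ^ 2) * ‖x‖ ^ 2 := by
    intro x
    have hUU : RCLike.re ⟪U x, U x⟫ = ‖P x‖ ^ 2 := by
      have h1 : ⟪U x, U x⟫ = ⟪P x, x⟫ := by
        rw [← adjoint_inner_left, hUUP]
      have h2 : ⟪P x, x⟫ = ⟪P x, P x⟫ := by
        calc ⟪P x, x⟫ = ⟪P (P x), x⟫ := by rw [hPid]
        _ = ⟪P x, P x⟫ := hPs _ _
      rw [h1, h2, inner_self_eq_norm_sq]
    have hUPx : RCLike.re ⟪U x, P x⟫ = RCLike.re ⟪R x, x⟫ := by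
      have h : ⟪U x, P x⟫ = ⟪P (U x), x⟫ := (hPs _ _).symm
      rw [h, hPU]
    have hPUx : RCLike.re ⟪P x, U x⟫ = RCLike.re ⟪R x, x⟫ := by
      have h : ⟪P x, U x⟫ = (starRingEnd ℂ) ⟪U x, P x⟫ := (inner_conj_symm _ _).symm
      rw [h, RCLike.conj_re, hUPx]
    have hPP : RCLike.re ⟪P x, P x⟫ = ‖P x‖ ^ 2 := inner_self_eq_norm_sq (P x)
    have hnorm : ‖(U - P) x‖ ^ 2 = 2 * ‖P x‖ ^ 2 - 2 * RCLike.re ⟪R x, x⟫ := by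
      have h0 : (U - P) x = U x - P x := sub_apply U P x
      rw [h0, ← inner_self_eq_norm_sq (𝕜 := ℂ)]
      simp only [inner_sub_left, inner_sub_right, map_sub]
      rw [hUU, hUPx, hPUx, hPP]
      ring
    have hlow2 : ε ^ 2 * ‖P x‖ ^ 2 ≤ ‖R x‖ ^ 2 := by
      rw [hRQP]
      have h := hlow x
      have h0 : 0 ≤ ε * ‖P x‖ := mul_nonneg hε0.le (norm_nonneg _)
      nlinarith [h, h0]
    have hRre := hRsq x
    have hPn := hPnorm x
    have hsq : ‖P x‖ ^ 2 ≤ ‖x‖ ^ 2 := by nlinarith [norm_nonneg (P x)]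
    have hcoef : (0:ℝ) ≤ 2 - 2 * ε ^ 2 := by
      have h' : ε ^ 2 ≤ 1 := pow_le_one₀ hε0.le hε1
      linarith
    have hmul : (2 - 2 * ε ^ 2) * ‖P x‖ ^ 2 ≤ (2 - 2 * ε ^ 2) * ‖x‖ ^ 2 :=
      mul_le_mul_of_nonneg_left hsq hcoef
    rw [hnorm]
    linarith [hmul, hlow2, hRre]
  -- conclude
  have h2ε : 0 ≤ 2 - 2 * ε ^ 2 := by
    have h' : ε ^ 2 ≤ 1 := pow_le_one₀ hε0.le hε1
    linarith
  have hbound : ‖U - P‖ ≤ Real.sqrt (2 - 2 * ε ^ 2) := by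
    refine opNorm_le_bound _ (Real.sqrt_nonneg _) (fun x => ?_)
    have h1 : ‖(U - P) x‖ ^ 2 ≤ (Real.sqrt (2 - 2 * ε ^ 2) * ‖x‖) ^ 2 := by
      rw [mul_pow, Real.sq_sqrt h2ε]
      exact key x
    have h2 : 0 ≤ Real.sqrt (2 - 2 * ε ^ 2) * ‖x‖ :=
      mul_nonneg (Real.sqrt_nonneg _) (norm_nonneg _)
    calc ‖(U - P) x‖ = Real.sqrt (‖(U - P) x‖ ^ 2) := (Real.sqrt_sq (norm_nonneg _)).symm
    _ ≤ Real.sqrt ((Real.sqrt (2 - 2 * ε ^ 2) * ‖x‖) ^ 2) := Real.sqrt_le_sqrt h1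
    _ = Real.sqrt (2 - 2 * ε ^ 2) * ‖x‖ := Real.sqrt_sq h2
  refine lt_of_le_of_lt hbound ?_
  have h3 : 2 - 2 * ε ^ 2 < 2 := by
    have h' : 0 < ε ^ 2 := pow_pos hε0 2
    linarith
  exact Real.sqrt_lt_sqrt h2ε h3
end

section
/- Let P₁, P₂ be mutually orthogonal projections and Q₁, Q₂ be mutually orthogonal projections on a separable Hilbert space. If ‖P₁ − Q₁‖ < 1 and ‖P₂ − Q₂‖ < 1, then rank((P₁+P₂)ᗮ) = rank((Q₁+Q₂)ᗮ), i.e., the dimensions of the orthogonal complements of ran(P₁)⊕ran(P₂) and ran(Q₁)⊕ran(Q₂) (as cardinals, or both infinite) agree. -/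
open ContinuousLinearMap

local notation "⟪" x ", " y "⟫" => @inner ℂ _ _ x y

private lemma coercive_bijective {H : Type*} [NormedAddCommGroup H] [InnerProductSpace ℂ H]
    [CompleteSpace H] (T : H →L[ℂ] H) (c : ℝ) (hc : 0 < c)
    (hT : ∀ z, c * ‖z‖ ^ 2 ≤ RCLike.re ⟪T z, z⟫) : Function.Bijective T := by
  have hlow : ∀ z, c * ‖z‖ ≤ ‖T z‖ := by
    intro z
    rcases eq_or_ne z 0 with h | h
    · simp [h]
    · have h1 := hT z
      have h2 : RCLike.re ⟪T z, z⟫ ≤ ‖T z‖ * ‖z‖ := re_inner_le_norm _ _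
      have hz : 0 < ‖z‖ := norm_pos_iff.mpr h
      nlinarith
  have hinj : Function.Injective T := by
    intro a b hab
    have h0 : T (a - b) = 0 := by rw [map_sub, hab, sub_self]
    have h3 := hlow (a - b)
    rw [h0, norm_zero] at h3
    have h4 : ‖a - b‖ ≤ 0 := by nlinarith
    rw [← sub_eq_zero]
    exact norm_le_zero_iff.mp h4
  refine ⟨hinj, ?_⟩
  have hanti : AntilipschitzWith (⟨c⁻¹, by positivity⟩ : NNReal) T := by
    apply T.antilipschitz_of_bound
    intro x
    have h5 := hlow x
    have hc' : c⁻¹ * c = 1 := inv_mul_cancel₀ hc.ne'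
    show ‖x‖ ≤ c⁻¹ * ‖T x‖
    nlinarith [norm_nonneg (T x), norm_nonneg x]
  have hclosed : IsClosed (Set.range T) := hanti.isClosed_range T.uniformContinuous
  have hclosed' : IsClosed ((LinearMap.range (T : H →ₗ[ℂ] H) : Submodule ℂ H) : Set H) := by
    have : ((LinearMap.range (T : H →ₗ[ℂ] H) : Submodule ℂ H) : Set H) = Set.range T := by
      ext x; simp [LinearMap.mem_range]
    rwa [this]
  haveI : CompleteSpace (LinearMap.range (T : H →ₗ[ℂ] H) : Submodule ℂ H) := hclosed'.completeSpace_coe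
  have hsurj : LinearMap.range (T : H →ₗ[ℂ] H) = ⊤ := by
    rw [← Submodule.orthogonal_eq_bot_iff]
    rw [Submodule.eq_bot_iff]
    intro y hy
    have hTy : ⟪T y, y⟫ = 0 := by
      rw [Submodule.mem_orthogonal] at hy
      exact hy (T y) (LinearMap.mem_range_self _ y)
    have h6 := hT y
    rw [hTy] at h6
    simp only [map_zero] at h6
    have h7 : ‖y‖ ^ 2 ≤ 0 := by nlinarith
    have h8 : ‖y‖ ≤ 0 := by nlinarith [norm_nonneg y]
    exact norm_le_zero_iff.mp h8
  intro y
  have hy : y ∈ LinearMap.range (T : H →ₗ[ℂ] H) := by rw [hsurj]; trivial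
  obtain ⟨x, hx⟩ := hy
  exact ⟨x, hx⟩

private lemma proj_est {H : Type*} [NormedAddCommGroup H] [InnerProductSpace ℂ H]
    [CompleteSpace H] (A B : H →L[ℂ] H) (hBsa : IsSelfAdjoint B) (hB2 : ∀ z, B (B z) = B z)
    (u : H) (hu : A u = u) : (1 - ‖A - B‖ ^ 2) * ‖u‖ ^ 2 ≤ ‖B u‖ ^ 2 := by
  have horth : ⟪B u, u - B u⟫ = 0 := by
    have hmv : ⟪B u, u - B u⟫ = ⟪u, B (u - B u)⟫ := by
      have h := ContinuousLinearMap.adjoint_inner_left B (u - B u) u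
      rwa [hBsa.adjoint_eq] at h
    have hz : B (u - B u) = 0 := by rw [map_sub, hB2, sub_self]
    rw [hmv, hz, inner_zero_right]
  have hdecomp : ‖u‖ ^ 2 = ‖B u‖ ^ 2 + ‖u - B u‖ ^ 2 := by
    have h0 : u = B u + (u - B u) := by abel
    calc ‖u‖ ^ 2 = ‖B u + (u - B u)‖ ^ 2 := by rw [← h0]
      _ = ‖B u‖ ^ 2 + 2 * RCLike.re ⟪B u, u - B u⟫ + ‖u - B u‖ ^ 2 :=
          norm_add_sq (𝕜 := ℂ) _ _
      _ = ‖B u‖ ^ 2 + ‖u - B u‖ ^ 2 := by rw [horth]; simp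
  have hest : ‖u - B u‖ ≤ ‖A - B‖ * ‖u‖ := by
    have h0 : (A - B) u = u - B u := by rw [ContinuousLinearMap.sub_apply, hu]
    rw [← h0]
    exact (A - B).le_opNorm u
  nlinarith [norm_nonneg (u - B u), norm_nonneg u, norm_nonneg (A - B),
    mul_nonneg (norm_nonneg (A - B)) (norm_nonneg u)]

private lemma proj_null {H : Type*} [NormedAddCommGroup H] [InnerProductSpace ℂ H]
    [CompleteSpace H] (A B : H →L[ℂ] H) (hBsa : IsSelfAdjoint B) (hB2 : ∀ z, B (B z) = B z)
    (hn : ‖A - B‖ < 1) (u : H) (hu : A u = u) (h0 : B u = 0) : u = 0 := by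
  have hE := proj_est A B hBsa hB2 u hu
  rw [h0, norm_zero] at hE
  have hd : 0 < 1 - ‖A - B‖ ^ 2 := by nlinarith [norm_nonneg (A - B)]
  have h9 : (1 - ‖A - B‖ ^ 2) * ‖u‖ ^ 2 ≤ (1 - ‖A - B‖ ^ 2) * 0 := by
    simpa using hE
  have h10 : ‖u‖ ^ 2 ≤ 0 := le_of_mul_le_mul_left h9 hd
  have h11 : ‖u‖ = 0 := by nlinarith [norm_nonneg u]
  exact norm_eq_zero.mp h11

set_option maxHeartbeats 3000000 in
set_option maxRecDepth 20000 in
/-- If `P₁ ⟂ P₂` and `Q₁ ⟂ Q₂` are pairs of mutually orthogonal projections on a separable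
Hilbert space with `‖P₁ - Q₁‖ < 1` and `‖P₂ - Q₂‖ < 1`, then
`rank (P₁+P₂)ᗮ = rank (Q₁+Q₂)ᗮ`. -/
theorem stmt2 {H : Type*} [NormedAddCommGroup H] [InnerProductSpace ℂ H]
    [CompleteSpace H] [TopologicalSpace.SeparableSpace H]
    (P₁ P₂ Q₁ Q₂ : H →L[ℂ] H)
    (hP₁sa : IsSelfAdjoint P₁) (hP₁2 : P₁ ∘L P₁ = P₁)
    (hP₂sa : IsSelfAdjoint P₂) (hP₂2 : P₂ ∘L P₂ = P₂)
    (hQ₁sa : IsSelfAdjoint Q₁) (hQ₁2 : Q₁ ∘L Q₁ = Q₁)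
    (hQ₂sa : IsSelfAdjoint Q₂) (hQ₂2 : Q₂ ∘L Q₂ = Q₂)
    (hPorth : P₁ ∘L P₂ = 0) (hQorth : Q₁ ∘L Q₂ = 0)
    (h1 : ‖P₁ - Q₁‖ < 1) (h2 : ‖P₂ - Q₂‖ < 1) :
    Module.rank ℂ (LinearMap.range ((1 - P₁ - P₂ : H →L[ℂ] H) : H →ₗ[ℂ] H)) =
      Module.rank ℂ (LinearMap.range ((1 - Q₁ - Q₂ : H →L[ℂ] H) : H →ₗ[ℂ] H)) := by
  classical
  -- moving self-adjoint operators across the inner product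
  have sa_move : ∀ (A : H →L[ℂ] H), IsSelfAdjoint A → ∀ x y : H, ⟪A x, y⟫ = ⟪x, A y⟫ := by
    intro A hA x y
    conv_lhs => rw [← hA.adjoint_eq]
    exact ContinuousLinearMap.adjoint_inner_left A y x
  -- reversed orthogonality
  have hPorth' : P₂ ∘L P₁ = 0 := by
    have h := congrArg ContinuousLinearMap.adjoint hPorth
    rwa [ContinuousLinearMap.adjoint_comp, hP₁sa.adjoint_eq, hP₂sa.adjoint_eq, map_zero] at h
  have hQorth' : Q₂ ∘L Q₁ = 0 := by
    have h := congrArg ContinuousLinearMap.adjoint hQorth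
    rwa [ContinuousLinearMap.adjoint_comp, hQ₁sa.adjoint_eq, hQ₂sa.adjoint_eq, map_zero] at h
  -- pointwise forms
  have p11 : ∀ z, P₁ (P₁ z) = P₁ z := fun z => ContinuousLinearMap.ext_iff.mp hP₁2 z
  have p22 : ∀ z, P₂ (P₂ z) = P₂ z := fun z => ContinuousLinearMap.ext_iff.mp hP₂2 z
  have q11 : ∀ z, Q₁ (Q₁ z) = Q₁ z := fun z => ContinuousLinearMap.ext_iff.mp hQ₁2 z
  have q22 : ∀ z, Q₂ (Q₂ z) = Q₂ z := fun z => ContinuousLinearMap.ext_iff.mp hQ₂2 z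
  have p12 : ∀ z, P₁ (P₂ z) = 0 := fun z => by
    have := ContinuousLinearMap.ext_iff.mp hPorth z; simpa using this
  have p21 : ∀ z, P₂ (P₁ z) = 0 := fun z => by
    have := ContinuousLinearMap.ext_iff.mp hPorth' z; simpa using this
  have q12 : ∀ z, Q₁ (Q₂ z) = 0 := fun z => by
    have := ContinuousLinearMap.ext_iff.mp hQorth z; simpa using this
  have q21 : ∀ z, Q₂ (Q₁ z) = 0 := fun z => by
    have := ContinuousLinearMap.ext_iff.mp hQorth' z; simpa using this
  set P : H →L[ℂ] H := P₁ + P₂ with hPdef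
  set Q : H →L[ℂ] H := Q₁ + Q₂ with hQdef
  have Papp : ∀ z, P z = P₁ z + P₂ z := fun z => rfl
  have Qapp : ∀ z, Q z = Q₁ z + Q₂ z := fun z => rfl
  have Psa : IsSelfAdjoint P := hP₁sa.add hP₂sa
  have Qsa : IsSelfAdjoint Q := hQ₁sa.add hQ₂sa
  have pP : ∀ z, P (P z) = P z := by
    intro z
    simp only [Papp, map_add, p11, p12, p21, p22, add_zero, zero_add]
  have qQ : ∀ z, Q (Q z) = Q z := by
    intro z
    simp only [Qapp, map_add, q11, q12, q21, q22, add_zero, zero_add]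
  have pP₁ : ∀ z, P (P₁ z) = P₁ z := by
    intro z; simp only [Papp, p11, p21, add_zero]
  have pP₂ : ∀ z, P (P₂ z) = P₂ z := by
    intro z; simp only [Papp, p12, p22, zero_add]
  have qQ₁ : ∀ z, Q (Q₁ z) = Q₁ z := by
    intro z; simp only [Qapp, q11, q21, add_zero]
  have qQ₂ : ∀ z, Q (Q₂ z) = Q₂ z := by
    intro z; simp only [Qapp, q12, q22, zero_add]
  have p1P : ∀ z, P₁ (P z) = P₁ z := by
    intro z; simp only [Papp, map_add, p11, p12, add_zero]
  have p2P : ∀ z, P₂ (P z) = P₂ z := by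
    intro z; simp only [Papp, map_add, p21, p22, zero_add]
  have q1Q : ∀ z, Q₁ (Q z) = Q₁ z := by
    intro z; simp only [Qapp, map_add, q11, q12, add_zero]
  have q2Q : ∀ z, Q₂ (Q z) = Q₂ z := by
    intro z; simp only [Qapp, map_add, q21, q22, zero_add]
  have EQ₁ : ∀ u : H, P₁ u = u → (1 - ‖P₁ - Q₁‖ ^ 2) * ‖u‖ ^ 2 ≤ ‖Q₁ u‖ ^ 2 :=
    fun u hu => proj_est P₁ Q₁ hQ₁sa q11 u hu
  have EQ₂ : ∀ u : H, P₂ u = u → (1 - ‖P₂ - Q₂‖ ^ 2) * ‖u‖ ^ 2 ≤ ‖Q₂ u‖ ^ 2 :=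
    fun u hu => proj_est P₂ Q₂ hQ₂sa q22 u hu
  have EP₁ : ∀ u : H, Q₁ u = u → (1 - ‖P₁ - Q₁‖ ^ 2) * ‖u‖ ^ 2 ≤ ‖P₁ u‖ ^ 2 := by
    intro u hu
    have := proj_est Q₁ P₁ hP₁sa p11 u hu
    rwa [norm_sub_rev] at this
  have EP₂ : ∀ u : H, Q₂ u = u → (1 - ‖P₂ - Q₂‖ ^ 2) * ‖u‖ ^ 2 ≤ ‖P₂ u‖ ^ 2 := by
    intro u hu
    have := proj_est Q₂ P₂ hP₂sa p22 u hu
    rwa [norm_sub_rev] at this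
  have hd₁ : 0 < 1 - ‖P₁ - Q₁‖ ^ 2 := by nlinarith [norm_nonneg (P₁ - Q₁)]
  have hd₂ : 0 < 1 - ‖P₂ - Q₂‖ ^ 2 := by nlinarith [norm_nonneg (P₂ - Q₂)]
  have CQ₁ : ∀ u : H, P₁ u = u → Q₁ u = 0 → u = 0 :=
    fun u hu h0 => proj_null P₁ Q₁ hQ₁sa q11 h1 u hu h0
  have CQ₂ : ∀ u : H, P₂ u = u → Q₂ u = 0 → u = 0 :=
    fun u hu h0 => proj_null P₂ Q₂ hQ₂sa q22 h2 u hu h0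
  have CP₁ : ∀ u : H, Q₁ u = u → P₁ u = 0 → u = 0 :=
    fun u hu h0 => proj_null Q₁ P₁ hP₁sa p11 (by rwa [norm_sub_rev]) u hu h0
  have CP₂ : ∀ u : H, Q₂ u = u → P₂ u = 0 → u = 0 :=
    fun u hu h0 => proj_null Q₂ P₂ hP₂sa p22 (by rwa [norm_sub_rev]) u hu h0
  -- general facts
  have pyth : ∀ (A : H →L[ℂ] H), IsSelfAdjoint A → (∀ z, A (A z) = A z) →
      ∀ z : H, ‖z‖ ^ 2 = ‖A z‖ ^ 2 + ‖z - A z‖ ^ 2 := by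
    intro A hA hA2 z
    have horth : ⟪A z, z - A z⟫ = 0 := by
      have h := ContinuousLinearMap.adjoint_inner_left A (z - A z) z
      rw [hA.adjoint_eq] at h
      rw [h, map_sub, hA2, sub_self, inner_zero_right]
    calc ‖z‖ ^ 2 = ‖A z + (z - A z)‖ ^ 2 := by rw [show A z + (z - A z) = z from by abel]
      _ = ‖A z‖ ^ 2 + 2 * RCLike.re ⟪A z, z - A z⟫ + ‖z - A z‖ ^ 2 := norm_add_sq (𝕜 := ℂ) _ _
      _ = ‖A z‖ ^ 2 + ‖z - A z‖ ^ 2 := by rw [horth]; simp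
  have nsum : ∀ a b : H, ⟪a, b⟫ = 0 → ‖a + b‖ ^ 2 = ‖a‖ ^ 2 + ‖b‖ ^ 2 := by
    intro a b h
    rw [norm_add_sq (𝕜 := ℂ), h]
    simp
  have oP : ∀ z w : H, ⟪P₁ z, P₂ w⟫ = 0 := by
    intro z w
    have h := ContinuousLinearMap.adjoint_inner_left P₁ (P₂ w) z
    rw [hP₁sa.adjoint_eq] at h
    rw [h, p12, inner_zero_right]
  have oQ : ∀ z w : H, ⟪Q₁ z, Q₂ w⟫ = 0 := by
    intro z w
    have h := ContinuousLinearMap.adjoint_inner_left Q₁ (Q₂ w) z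
    rw [hQ₁sa.adjoint_eq] at h
    rw [h, q12, inner_zero_right]
  -- the intertwiner V and its adjoint
  set V : H →L[ℂ] H := P₁ ∘L Q₁ + P₂ ∘L Q₂ with hVdef
  have Vapp : ∀ z, V z = P₁ (Q₁ z) + P₂ (Q₂ z) := fun z => rfl
  have hVadj : ContinuousLinearMap.adjoint V = Q₁ ∘L P₁ + Q₂ ∘L P₂ := by
    rw [hVdef, map_add, ContinuousLinearMap.adjoint_comp, ContinuousLinearMap.adjoint_comp,
      hP₁sa.adjoint_eq, hP₂sa.adjoint_eq, hQ₁sa.adjoint_eq, hQ₂sa.adjoint_eq]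
  set Vs : H →L[ℂ] H := ContinuousLinearMap.adjoint V with hVsdef
  have Vsapp : ∀ z, Vs z = Q₁ (P₁ z) + Q₂ (P₂ z) := by
    intro z
    rw [hVadj]
    rfl
  have qR : ∀ z, Q (z - Q z) = 0 := by
    intro z
    rw [map_sub, qQ, sub_self]
  have pR : ∀ z, P (z - P z) = 0 := by
    intro z
    rw [map_sub, pP, sub_self]
  set N : H →L[ℂ] H := Vs ∘L V + (1 - Q) with hNdef
  have Napp : ∀ z, N z = Vs (V z) + (z - Q z) := fun z => rfl
  set cN : ℝ := min (1 - ‖P₁ - Q₁‖ ^ 2) (1 - ‖P₂ - Q₂‖ ^ 2) with hcNdef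
  have hcNpos : 0 < cN := lt_min hd₁ hd₂
  have hNcoer : ∀ z, cN * ‖z‖ ^ 2 ≤ RCLike.re ⟪N z, z⟫ := by
    intro z
    have e1 : ⟪N z, z⟫ = ⟪V z, V z⟫ + ⟪z - Q z, z - Q z⟫ := by
      rw [Napp, inner_add_left]
      congr 1
      · rw [hVsdef]
        exact ContinuousLinearMap.adjoint_inner_left V z (V z)
      · have h0 : ⟪z - Q z, Q z⟫ = 0 := by
          have h := ContinuousLinearMap.adjoint_inner_left Q z (z - Q z)
          rw [Qsa.adjoint_eq] at h
          rw [← h, qR, inner_zero_left]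
        calc ⟪z - Q z, z⟫ = ⟪z - Q z, (z - Q z) + Q z⟫ := by
              rw [show (z - Q z) + Q z = z from by abel]
          _ = ⟪z - Q z, z - Q z⟫ + ⟪z - Q z, Q z⟫ := inner_add_right _ _ _
          _ = ⟪z - Q z, z - Q z⟫ := by rw [h0, add_zero]
    have e2 : RCLike.re ⟪N z, z⟫ = ‖V z‖ ^ 2 + ‖z - Q z‖ ^ 2 := by
      rw [e1, map_add, inner_self_eq_norm_sq, inner_self_eq_norm_sq]
    have e3 : ‖V z‖ ^ 2 = ‖P₁ (Q₁ z)‖ ^ 2 + ‖P₂ (Q₂ z)‖ ^ 2 := by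
      rw [Vapp]
      exact nsum _ _ (oP (Q₁ z) (Q₂ z))
    have e4 := EP₁ (Q₁ z) (q11 z)
    have e5 := EP₂ (Q₂ z) (q22 z)
    have e6 : ‖Q z‖ ^ 2 = ‖Q₁ z‖ ^ 2 + ‖Q₂ z‖ ^ 2 := by
      rw [Qapp]
      exact nsum _ _ (oQ z z)
    have e7 := pyth Q Qsa qQ z
    have m1 : cN ≤ 1 - ‖P₁ - Q₁‖ ^ 2 := min_le_left _ _
    have m2 : cN ≤ 1 - ‖P₂ - Q₂‖ ^ 2 := min_le_right _ _
    have m3 : cN ≤ 1 := le_trans m1 (by nlinarith [norm_nonneg (P₁ - Q₁), sq_nonneg ‖P₁ - Q₁‖])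
    have t1 : (1 - ‖P₁ - Q₁‖ ^ 2 - cN) * ‖Q₁ z‖ ^ 2 ≥ 0 :=
      mul_nonneg (by linarith) (by positivity)
    have t2 : (1 - ‖P₂ - Q₂‖ ^ 2 - cN) * ‖Q₂ z‖ ^ 2 ≥ 0 :=
      mul_nonneg (by linarith) (by positivity)
    have t3 : (1 - cN) * ‖z - Q z‖ ^ 2 ≥ 0 := mul_nonneg (by linarith) (by positivity)
    rw [e2]
    nlinarith [t1, t2, t3, e3, e4, e5, e6, e7]
  have hNbij := coercive_bijective N cN hcNpos hNcoer
  have hNinj := hNbij.1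
  set Ne := ContinuousLinearEquiv.ofBijective N (LinearMap.ker_eq_bot.mpr hNbij.1)
      (LinearMap.range_eq_top.mpr hNbij.2) with hNedef
  set Ni : H →L[ℂ] H := (Ne.symm : H →L[ℂ] H) with hNidef
  have hNe_app : ∀ z, Ne z = N z := fun z => rfl
  have hNiN : ∀ z, Ni (N z) = z := by
    intro z
    show Ne.symm (N z) = z
    rw [← hNe_app]
    exact Ne.symm_apply_apply z
  have hNNi : ∀ z, N (Ni z) = z := by
    intro z
    have h := Ne.apply_symm_apply z
    rwa [hNe_app] at h
  have hNQ : ∀ z, N (Q z) = Q (N z) := by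
    intro z
    have l1 : N (Q z) = Vs (V z) := by
      rw [Napp]
      have hv : V (Q z) = V z := by rw [Vapp, Vapp, q1Q, q2Q]
      rw [hv, qQ, sub_self, add_zero]
    have l2 : Q (N z) = Vs (V z) := by
      rw [Napp, map_add, map_sub, qQ, sub_self, add_zero]
      simp only [Vsapp, map_add, qQ₁, qQ₂]
    rw [l1, l2]
  have hNiQ : ∀ z, Ni (Q z) = Q (Ni z) := by
    intro z
    apply hNinj
    rw [hNNi, hNQ, hNNi]
  set Z : H →L[ℂ] H := Ni ∘L Vs with hZdef
  have Zapp : ∀ z, Z z = Ni (Vs z) := fun z => rfl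
  have hZP : ∀ z, Z (P z) = Z z := by
    intro z
    rw [Zapp, Zapp]
    congr 1
    rw [Vsapp, Vsapp, p1P, p2P]
  have hQZ : ∀ z, Q (Z z) = Z z := by
    intro z
    rw [Zapp, ← hNiQ]
    congr 1
    simp only [Vsapp, map_add, qQ₁, qQ₂]
  have hVZ : ∀ h, V (Z h) = P h := by
    intro h
    have hg : Q (Z h) = Z h := hQZ h
    have h1 : N (Z h) = Vs h := by
      rw [Zapp]
      exact hNNi (Vs h)
    have h2 : Vs (V (Z h)) = Vs h := by
      rw [Napp, hg, sub_self, add_zero] at h1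
      exact h1
    have h3 : Vs (V (Z h) - P h) = 0 := by
      rw [map_sub, h2]
      rw [Vsapp, Vsapp, p1P, p2P, sub_self]
    have h4 : Q₁ (P₁ (V (Z h) - P h)) = 0 := by
      have h5 : Q₁ (Vs (V (Z h) - P h)) = 0 := by rw [h3, map_zero]
      rw [Vsapp, map_add, q11, q12, add_zero] at h5
      exact h5
    have h4' : Q₂ (P₂ (V (Z h) - P h)) = 0 := by
      have h5 : Q₂ (Vs (V (Z h) - P h)) = 0 := by rw [h3, map_zero]
      rw [Vsapp, map_add, q21, q22, zero_add] at h5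
      exact h5
    have h6 : P₁ (V (Z h) - P h) = 0 := CQ₁ _ (p11 _) h4
    have h6' : P₂ (V (Z h) - P h) = 0 := CQ₂ _ (p22 _) h4'
    have h7 : P (V (Z h) - P h) = V (Z h) - P h := by
      rw [map_sub, pP]
      congr 1
      simp only [Vapp, map_add, pP₁, pP₂]
    have h8 : V (Z h) - P h = 0 := by
      rw [← h7, Papp, h6, h6', add_zero]
    exact sub_eq_zero.mp h8
  -- operator-level identities and adjoints
  have hZP_op : Z ∘L P = Z := ContinuousLinearMap.ext hZP
  have hQZ_op : Q ∘L Z = Z := ContinuousLinearMap.ext hQZ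
  have hZVQ : ∀ z, Z (V (Q z)) = Q z := by
    intro z
    have hN : N (Q z) = Vs (V (Q z)) + (Q z - Q (Q z)) := Napp (Q z)
    rw [qQ, sub_self, add_zero] at hN
    rw [Zapp, ← hN, hNiN]
  have hZVQ_op : Z ∘L (V ∘L Q) = Q := ContinuousLinearMap.ext hZVQ
  set Zs : H →L[ℂ] H := ContinuousLinearMap.adjoint Z with hZsdef
  have hZsP : ∀ z, P (Zs z) = Zs z := by
    intro z
    have h := congrArg ContinuousLinearMap.adjoint hZP_op
    rw [ContinuousLinearMap.adjoint_comp, Psa.adjoint_eq, ← hZsdef] at h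
    exact ContinuousLinearMap.ext_iff.mp h z
  have hZsQ : ∀ z, Zs (Q z) = Zs z := by
    intro z
    have h := congrArg ContinuousLinearMap.adjoint hQZ_op
    rw [ContinuousLinearMap.adjoint_comp, Qsa.adjoint_eq, ← hZsdef] at h
    exact ContinuousLinearMap.ext_iff.mp h z
  have hQVsZs : ∀ z, Q (Vs (Zs z)) = Q z := by
    intro z
    have h := congrArg ContinuousLinearMap.adjoint hZVQ_op
    rw [ContinuousLinearMap.adjoint_comp, ContinuousLinearMap.adjoint_comp, Qsa.adjoint_eq,
      ← hVsdef, ← hZsdef] at h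
    exact ContinuousLinearMap.ext_iff.mp h z
  have hker1 : ∀ z, Q z = 0 → Zs z = 0 := by
    intro z h
    rw [← hZsQ z, h, map_zero]
  have hker2 : ∀ z, Zs z = 0 → Q z = 0 := by
    intro z h
    rw [← hQVsZs z, h, map_zero, map_zero]
  -- fine structure of Z on ran P₁ and ran P₂
  have hQ2ZP1 : ∀ z, Q₂ (Z (P₁ z)) = 0 := by
    intro z
    have hVv : V (Z (P₁ z)) = P₁ z := by rw [hVZ (P₁ z), pP₁]
    have h5 : P₂ (V (Z (P₁ z))) = P₂ (P₁ z) := congrArg P₂ hVv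
    rw [Vapp, map_add, p21, p22, zero_add, p21] at h5
    exact CP₂ _ (q22 _) h5
  have hQ1ZP2 : ∀ z, Q₁ (Z (P₂ z)) = 0 := by
    intro z
    have hVv : V (Z (P₂ z)) = P₂ z := by rw [hVZ (P₂ z), pP₂]
    have h5 : P₁ (V (Z (P₂ z))) = P₁ (P₂ z) := congrArg P₁ hVv
    rw [Vapp, map_add, p11, p12, add_zero, p12] at h5
    exact CP₁ _ (q11 _) h5
  have hQ1ZP1 : ∀ z, Q₁ (Z (P₁ z)) = Z (P₁ z) := by
    intro z
    have h := hQZ (P₁ z)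
    rw [Qapp, hQ2ZP1, add_zero] at h
    exact h
  have hQ2ZP2 : ∀ z, Q₂ (Z (P₂ z)) = Z (P₂ z) := by
    intro z
    have h := hQZ (P₂ z)
    rw [Qapp, hQ1ZP2, zero_add] at h
    exact h
  have hP1ZP1 : ∀ z, P₁ (Z (P₁ z)) = P₁ z := by
    intro z
    have hVv : V (Z (P₁ z)) = P₁ z := by rw [hVZ (P₁ z), pP₁]
    have h5 : P₁ (V (Z (P₁ z))) = P₁ (P₁ z) := congrArg P₁ hVv
    rw [Vapp, map_add, p11, p12, add_zero, p11] at h5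
    calc P₁ (Z (P₁ z)) = P₁ (Q₁ (Z (P₁ z))) := by rw [hQ1ZP1]
      _ = P₁ z := h5
  have hP2ZP2 : ∀ z, P₂ (Z (P₂ z)) = P₂ z := by
    intro z
    have hVv : V (Z (P₂ z)) = P₂ z := by rw [hVZ (P₂ z), pP₂]
    have h5 : P₂ (V (Z (P₂ z))) = P₂ (P₂ z) := congrArg P₂ hVv
    rw [Vapp, map_add, p21, p22, zero_add, p22] at h5
    calc P₂ (Z (P₂ z)) = P₂ (Q₂ (Z (P₂ z))) := by rw [hQ2ZP2]
      _ = P₂ z := h5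
  -- the operators B, Bs, G
  set Bop : H →L[ℂ] H := (P ∘L Zs) ∘L (1 - P) with hBopdef
  set Bs : H →L[ℂ] H := (1 - P) ∘L (Z ∘L P) with hBsdef
  have Bopapp : ∀ z, Bop z = P (Zs (z - P z)) := fun z => rfl
  have Bsapp : ∀ z, Bs z = Z (P z) - P (Z (P z)) := fun z => rfl
  have hBsP : ∀ z, Bs (P z) = Bs z := by
    intro z
    rw [Bsapp, Bsapp, pP]
  have hPBop : ∀ w, P (Bop w) = Bop w := by
    intro w
    rw [Bopapp, pP]
  have hPBs : ∀ z, P (Bs z) = 0 := by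
    intro z
    rw [Bsapp]
    exact pR (Z (P z))
  set G : H →L[ℂ] H := (P ∘L Zs) ∘L P + (2⁻¹ : ℂ) • (Bop ∘L Bs) + (1 - P) with hGdef
  have Gapp : ∀ z, G z = P (Zs (P z)) + (2⁻¹ : ℂ) • (Bop (Bs z)) + (z - P z) := fun z => rfl
  -- re of half-scalar products
  have hre2 : ∀ X : ℂ, RCLike.re ((2⁻¹ : ℂ) • X) = 2⁻¹ * RCLike.re X := by
    intro X
    have h0 : (2⁻¹ : ℂ) • X = (2⁻¹ : ℝ) • X := by
      rw [smul_eq_mul, Complex.real_smul]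
      norm_num
    rw [h0, RCLike.smul_re]
  -- coercivity of G
  have hGcoer : ∀ z, (1 : ℝ) * ‖z‖ ^ 2 ≤ RCLike.re ⟪G z, z⟫ := by
    intro z
    have hw : Z (P z) = Z (P₁ z) + Z (P₂ z) := by rw [Papp, map_add]
    have f11 : P₁ (Z (P₁ z)) = P₁ z := hP1ZP1 z
    have f22 : P₂ (Z (P₂ z)) = P₂ z := hP2ZP2 z
    have f3 : ⟪Z (P₁ z), Z (P₂ z)⟫ = 0 := by
      calc ⟪Z (P₁ z), Z (P₂ z)⟫ = ⟪Q₁ (Z (P₁ z)), Z (P₂ z)⟫ := by rw [hQ1ZP1]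
        _ = ⟪Z (P₁ z), Q₁ (Z (P₂ z))⟫ := sa_move Q₁ hQ₁sa _ _
        _ = 0 := by rw [hQ1ZP2, inner_zero_right]
    have f4 : ∀ a b : H, ⟪a, b⟫ = ⟪P₁ a, P₁ b⟫ + ⟪P₂ a, P₂ b⟫ + ⟪a - P a, b - P b⟫ := by
      intro a b
      have hb : P₁ b + P₂ b + (b - P b) = b := by rw [Papp]; abel
      have t1 : ⟪a, P₁ b⟫ = ⟪P₁ a, P₁ b⟫ := by
        rw [show P₁ b = P₁ (P₁ b) from (p11 b).symm, ← sa_move P₁ hP₁sa, p11]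
      have t2 : ⟪a, P₂ b⟫ = ⟪P₂ a, P₂ b⟫ := by
        rw [show P₂ b = P₂ (P₂ b) from (p22 b).symm, ← sa_move P₂ hP₂sa, p22]
      have t4 : ⟪P a, b - P b⟫ = 0 := by rw [sa_move P Psa, pR, inner_zero_right]
      have t3 : ⟪a, b - P b⟫ = ⟪a - P a, b - P b⟫ := by
        calc ⟪a, b - P b⟫ = ⟪(a - P a) + P a, b - P b⟫ := by
              rw [show (a - P a) + P a = a from by abel]
          _ = ⟪a - P a, b - P b⟫ + ⟪P a, b - P b⟫ := inner_add_left _ _ _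
          _ = ⟪a - P a, b - P b⟫ := by rw [t4, add_zero]
      calc ⟪a, b⟫ = ⟪a, P₁ b + P₂ b + (b - P b)⟫ := by rw [hb]
        _ = ⟪a, P₁ b⟫ + ⟪a, P₂ b⟫ + ⟪a, b - P b⟫ := by
            rw [inner_add_right, inner_add_right]
        _ = ⟪P₁ a, P₁ b⟫ + ⟪P₂ a, P₂ b⟫ + ⟪a - P a, b - P b⟫ := by rw [t1, t2, t3]
    -- the key identity
    have key : (0 : ℂ) = ⟪P₁ z, P₁ (Z (P₂ z))⟫ + ⟪P₂ (Z (P₁ z)), P₂ z⟫ +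
        ⟪Z (P₁ z) - P (Z (P₁ z)), Z (P₂ z) - P (Z (P₂ z))⟫ := by
      have h := f4 (Z (P₁ z)) (Z (P₂ z))
      rw [f3, f11, f22] at h
      exact h
    -- expand re ⟪G z, z⟫
    have g1 : ⟪P (Zs (P z)), z⟫ = ⟪P z, Z (P z)⟫ := by
      rw [sa_move P Psa, hZsdef]
      exact ContinuousLinearMap.adjoint_inner_left Z (P z) (P z)
    have hBsz : Bs z = Z (P z) - P (Z (P z)) := Bsapp z
    have hBopBs : Bop (Bs z) = P (Zs (Bs z)) := by
      rw [Bopapp, hPBs, sub_zero]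
    have g2 : ⟪Bop (Bs z), z⟫ = ⟪Bs z, Bs z⟫ := by
      have t0 : ⟪Bs z, P (Z (P z))⟫ = 0 := by
        rw [hBsz, ← sa_move P Psa, pR, inner_zero_left]
      have t1 : ⟪Bs z, Z (P z)⟫ = ⟪Bs z, Bs z⟫ := by
        conv_lhs => rw [show Z (P z) = Bs z + P (Z (P z)) from by rw [hBsz]; abel]
        rw [inner_add_right, t0, add_zero]
      rw [hBopBs, sa_move P Psa, hZsdef, ContinuousLinearMap.adjoint_inner_left]
      exact t1
    have g3 : ⟪z - P z, z⟫ = ⟪z - P z, z - P z⟫ := by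
      have h0 : ⟪z - P z, P z⟫ = 0 := by
        rw [← sa_move P Psa, pR, inner_zero_left]
      calc ⟪z - P z, z⟫ = ⟪z - P z, (z - P z) + P z⟫ := by
            rw [show (z - P z) + P z = z from by abel]
        _ = ⟪z - P z, z - P z⟫ + ⟪z - P z, P z⟫ := inner_add_right _ _ _
        _ = ⟪z - P z, z - P z⟫ := by rw [h0, add_zero]
    have e0 : ⟪G z, z⟫ = ⟪P (Zs (P z)), z⟫ + ⟪(2⁻¹ : ℂ) • Bop (Bs z), z⟫ + ⟪z - P z, z⟫ := by
      rw [Gapp, inner_add_left, inner_add_left]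
    have hconj : (starRingEnd ℂ) (2⁻¹ : ℂ) = 2⁻¹ := by
      simp [Complex.ext_iff]
    have e1 : ⟪(2⁻¹ : ℂ) • Bop (Bs z), z⟫ = (2⁻¹ : ℂ) • ⟪Bop (Bs z), z⟫ := by
      rw [inner_smul_left, hconj, smul_eq_mul]
    have hGz : RCLike.re ⟪G z, z⟫ = RCLike.re ⟪P z, Z (P z)⟫ + 2⁻¹ * ‖Bs z‖ ^ 2 +
        ‖z - P z‖ ^ 2 := by
      rw [e0, map_add, map_add, g1, g3, e1, hre2, g2, inner_self_eq_norm_sq,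
        inner_self_eq_norm_sq]
    -- real-part bookkeeping
    have a1 : ⟪P₁ z, Z (P₁ z)⟫ = ⟪z, P₁ z⟫ := by rw [sa_move P₁ hP₁sa, f11]
    have a1' : (⟪P₁ z, P₁ z⟫ : ℂ) = ⟪z, P₁ z⟫ := by
      calc (⟪P₁ z, P₁ z⟫ : ℂ) = ⟪z, P₁ (P₁ z)⟫ := sa_move P₁ hP₁sa _ _
        _ = ⟪z, P₁ z⟫ := by rw [p11]
    have a2 : ⟪P₂ z, Z (P₂ z)⟫ = ⟪z, P₂ z⟫ := by rw [sa_move P₂ hP₂sa, f22]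
    have a2' : (⟪P₂ z, P₂ z⟫ : ℂ) = ⟪z, P₂ z⟫ := by
      calc (⟪P₂ z, P₂ z⟫ : ℂ) = ⟪z, P₂ (P₂ z)⟫ := sa_move P₂ hP₂sa _ _
        _ = ⟪z, P₂ z⟫ := by rw [p22]
    have a3 : ⟪P₁ z, Z (P₂ z)⟫ = ⟪P₁ z, P₁ (Z (P₂ z))⟫ := by
      conv_lhs => rw [show P₁ z = P₁ (P₁ z) from (p11 z).symm]
      rw [sa_move P₁ hP₁sa]
    have a4 : ⟪P₂ z, Z (P₁ z)⟫ = ⟪P₂ z, P₂ (Z (P₁ z))⟫ := by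
      conv_lhs => rw [show P₂ z = P₂ (P₂ z) from (p22 z).symm]
      rw [sa_move P₂ hP₂sa]
    have hPzw : ⟪P z, Z (P z)⟫ = ⟪P₁ z, Z (P₁ z)⟫ + ⟪P₁ z, Z (P₂ z)⟫ +
        ⟪P₂ z, Z (P₁ z)⟫ + ⟪P₂ z, Z (P₂ z)⟫ := by
      rw [hw, Papp, inner_add_left, inner_add_right, inner_add_right]
      ring
    have hnPz : ‖P z‖ ^ 2 = ‖P₁ z‖ ^ 2 + ‖P₂ z‖ ^ 2 := by
      rw [Papp]
      exact nsum _ _ (oP z z)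
    have hnBs : ‖Bs z‖ ^ 2 = ‖Z (P₁ z) - P (Z (P₁ z))‖ ^ 2 +
        2 * RCLike.re ⟪Z (P₁ z) - P (Z (P₁ z)), Z (P₂ z) - P (Z (P₂ z))⟫ +
        ‖Z (P₂ z) - P (Z (P₂ z))‖ ^ 2 := by
      have hsum : Bs z = (Z (P₁ z) - P (Z (P₁ z))) + (Z (P₂ z) - P (Z (P₂ z))) := by
        rw [Bsapp, hw, map_add]
        abel
      rw [hsum]
      exact norm_add_sq (𝕜 := ℂ) _ _
    have keyre : (0 : ℝ) = RCLike.re ⟪P₁ z, P₁ (Z (P₂ z))⟫ +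
        RCLike.re ⟪P₂ (Z (P₁ z)), P₂ z⟫ +
        RCLike.re ⟪Z (P₁ z) - P (Z (P₁ z)), Z (P₂ z) - P (Z (P₂ z))⟫ := by
      have h := congrArg RCLike.re key
      rwa [map_add, map_add, map_zero] at h
    have hre_sym : RCLike.re ⟪P₂ z, P₂ (Z (P₁ z))⟫ = RCLike.re ⟪P₂ (Z (P₁ z)), P₂ z⟫ :=
      inner_re_symm _ _
    have hre1 : RCLike.re ⟪P₁ z, Z (P₁ z)⟫ = ‖P₁ z‖ ^ 2 := by
      rw [a1, ← a1', inner_self_eq_norm_sq]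
    have hre2' : RCLike.re ⟪P₂ z, Z (P₂ z)⟫ = ‖P₂ z‖ ^ 2 := by
      rw [a2, ← a2', inner_self_eq_norm_sq]
    have hrePzw : RCLike.re ⟪P z, Z (P z)⟫ = ‖P₁ z‖ ^ 2 + ‖P₂ z‖ ^ 2 +
        (RCLike.re ⟪P₁ z, P₁ (Z (P₂ z))⟫ + RCLike.re ⟪P₂ (Z (P₁ z)), P₂ z⟫) := by
      rw [hPzw, map_add, map_add, map_add, hre1, hre2']
      rw [a3, a4, hre_sym]
      ring
    have hz2 : ‖z‖ ^ 2 = ‖P z‖ ^ 2 + ‖z - P z‖ ^ 2 := pyth P Psa pP z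
    rw [hGz]
    nlinarith [sq_nonneg ‖Z (P₁ z) - P (Z (P₁ z))‖, sq_nonneg ‖Z (P₂ z) - P (Z (P₂ z))‖,
      keyre, hrePzw, hnBs, hnPz, hz2]
  have hGbij := coercive_bijective G 1 one_pos hGcoer
  set Ge := ContinuousLinearEquiv.ofBijective G (LinearMap.ker_eq_bot.mpr hGbij.1)
      (LinearMap.range_eq_top.mpr hGbij.2) with hGedef
  set Gi : H →L[ℂ] H := (Ge.symm : H →L[ℂ] H) with hGidef
  have hGe_app : ∀ z, Ge z = G z := fun z => rfl
  have hGiG : ∀ z, Gi (G z) = z := by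
    intro z
    show Ge.symm (G z) = z
    rw [← hGe_app]
    exact Ge.symm_apply_apply z
  have hGGi : ∀ z, G (Gi z) = z := by
    intro z
    have h := Ge.apply_symm_apply z
    rwa [hGe_app] at h
  have hGP : ∀ z, G (P z) = P (G z) := by
    intro z
    have l1 : G (P z) = P (Zs (P z)) + (2⁻¹ : ℂ) • Bop (Bs z) := by
      rw [Gapp, pP, sub_self, add_zero, hBsP]
    have l2 : P (G z) = P (Zs (P z)) + (2⁻¹ : ℂ) • Bop (Bs z) := by
      rw [Gapp, map_add, map_add, map_smul, pP, pR, add_zero, hPBop]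
    rw [l1, l2]
  have hGiP : ∀ z, Gi (P z) = P (Gi z) := by
    intro z
    apply hGbij.1
    rw [hGGi, hGP, hGGi]
  set Θ : H →L[ℂ] H := (2⁻¹ : ℂ) • Bs - (1 - P) with hΘdef
  have Θapp : ∀ z, Θ z = (2⁻¹ : ℂ) • Bs z - (z - P z) := fun z => rfl
  set Ξ : H →L[ℂ] H := Gi ∘L Bop + (2⁻¹ : ℂ) • (Bs ∘L (Gi ∘L Bop)) - 1 with hΞdef
  have Ξapp : ∀ z, Ξ z = Gi (Bop z) + (2⁻¹ : ℂ) • Bs (Gi (Bop z)) - z := fun z => rfl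
  have hPΘ : ∀ z, P (Θ z) = 0 := by
    intro z
    rw [Θapp, map_sub, map_smul, hPBs, pR, smul_zero, sub_self]
  have keyA : ∀ z, Q z = 0 → G (P z) = Bop (Θ z) := by
    intro z hz
    have hzs : Zs z = 0 := hker1 z hz
    have l1 : G (P z) = P (Zs (P z)) + (2⁻¹ : ℂ) • Bop (Bs z) := by
      rw [Gapp, pP, sub_self, add_zero, hBsP]
    have l2 : P (Zs (P z)) = - P (Zs (z - P z)) := by
      have hsub : Zs (P z) = Zs z - Zs (z - P z) := by
        rw [← map_sub]
        congr 1
        abel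
      rw [hsub, hzs, zero_sub, map_neg]
    have r1 : Bop (Θ z) = (2⁻¹ : ℂ) • Bop (Bs z) - Bop (z - P z) := by
      rw [Θapp, map_sub, map_smul]
    have r2 : Bop (z - P z) = P (Zs (z - P z)) := by
      have heq : (z - P z) - P (z - P z) = z - P z := by rw [pR, sub_zero]
      rw [Bopapp, heq]
    rw [l1, l2, r1, r2]
    abel
  have keyXiTheta : ∀ z, Q z = 0 → Ξ (Θ z) = z := by
    intro z hz
    have h0 : Bop (Θ z) = G (P z) := (keyA z hz).symm
    rw [Ξapp, h0, hGiG, hBsP, Θapp]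
    abel
  have keyXimem : ∀ h, P h = 0 → Q (Ξ h) = 0 := by
    intro h hp
    set x : H := Gi (Bop h) with hxdef
    have hPx : P x = x := by
      rw [hxdef, ← hGiP, hPBop]
    have hΞh : Ξ h = x + ((2⁻¹ : ℂ) • Bs x - h) := by
      rw [Ξapp, ← hxdef]
      abel
    have c1 : P (Zs x) = G x - (2⁻¹ : ℂ) • Bop (Bs x) := by
      have hge : G x = P (Zs (P x)) + (2⁻¹ : ℂ) • Bop (Bs x) + (x - P x) := Gapp x
      rw [hPx, sub_self, add_zero] at hge
      rw [hge]
      abel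
    have c2 : P (Zs (Bs x)) = Bop (Bs x) := by
      rw [Bopapp, hPBs, sub_zero]
    have c3 : P (Zs h) = Bop h := by
      have heq : h - P h = h := by rw [hp, sub_zero]
      rw [Bopapp, heq]
    have hG : G x = Bop h := by
      rw [hxdef]
      exact hGGi (Bop h)
    have hZsΞ : P (Zs (Ξ h)) = 0 := by
      have hsplit : Zs (Ξ h) = Zs x + ((2⁻¹ : ℂ) • Zs (Bs x) - Zs h) := by
        rw [hΞh, map_add, map_sub, map_smul]
      rw [hsplit, map_add, map_sub, map_smul, c1, c2, c3, hG]
      abel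
    apply hker2
    rw [← hZsP (Ξ h)]
    exact hZsΞ
  have keyThetaXi : ∀ h, P h = 0 → Θ (Ξ h) = h := by
    intro h hp
    set x : H := Gi (Bop h) with hxdef
    have hPx : P x = x := by
      rw [hxdef, ← hGiP, hPBop]
    have hΞh : Ξ h = x + ((2⁻¹ : ℂ) • Bs x - h) := by
      rw [Ξapp, ← hxdef]
      abel
    have hPΞ : P (Ξ h) = x := by
      rw [hΞh, map_add, map_sub, map_smul, hPx, hPBs, hp, smul_zero, sub_zero, add_zero]
    have hBsΞ : Bs (Ξ h) = Bs x := by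
      rw [Bsapp, Bsapp, hPΞ, hPx]
    rw [Θapp, hBsΞ, hPΞ, hΞh]
    abel
  -- the ranges are the kernels of P and Q
  have hSP : ∀ z : H, z ∈ LinearMap.range ((1 - P₁ - P₂ : H →L[ℂ] H) : H →ₗ[ℂ] H) ↔ P z = 0 := by
    intro z
    have happ : ∀ w, (1 - P₁ - P₂ : H →L[ℂ] H) w = w - P w := by
      intro w
      show w - P₁ w - P₂ w = w - P w
      rw [Papp]
      abel
    constructor
    · rintro ⟨w, rfl⟩
      rw [ContinuousLinearMap.coe_coe, happ, map_sub, pP, sub_self]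
    · intro hz
      exact ⟨z, by rw [ContinuousLinearMap.coe_coe, happ, hz, sub_zero]⟩
  have hSQ : ∀ z : H, z ∈ LinearMap.range ((1 - Q₁ - Q₂ : H →L[ℂ] H) : H →ₗ[ℂ] H) ↔ Q z = 0 := by
    intro z
    have happ : ∀ w, (1 - Q₁ - Q₂ : H →L[ℂ] H) w = w - Q w := by
      intro w
      show w - Q₁ w - Q₂ w = w - Q w
      rw [Qapp]
      abel
    constructor
    · rintro ⟨w, rfl⟩
      rw [ContinuousLinearMap.coe_coe, happ, map_sub, qQ, sub_self]
    · intro hz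
      exact ⟨z, by rw [ContinuousLinearMap.coe_coe, happ, hz, sub_zero]⟩
  -- build the linear equivalence and conclude
  have hfmem : ∀ z ∈ LinearMap.range ((1 - Q₁ - Q₂ : H →L[ℂ] H) : H →ₗ[ℂ] H),
      (Θ : H →ₗ[ℂ] H) z ∈ LinearMap.range ((1 - P₁ - P₂ : H →L[ℂ] H) : H →ₗ[ℂ] H) := by
    intro z _
    rw [hSP]
    exact hPΘ z
  have hgmem : ∀ z ∈ LinearMap.range ((1 - P₁ - P₂ : H →L[ℂ] H) : H →ₗ[ℂ] H),
      (Ξ : H →ₗ[ℂ] H) z ∈ LinearMap.range ((1 - Q₁ - Q₂ : H →L[ℂ] H) : H →ₗ[ℂ] H) := by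
    intro z hz
    rw [hSQ]
    exact keyXimem z ((hSP z).mp hz)
  let f := LinearMap.restrict (Θ : H →ₗ[ℂ] H) hfmem
  let g := LinearMap.restrict (Ξ : H →ₗ[ℂ] H) hgmem
  have hfg : ∀ x : (LinearMap.range ((1 - P₁ - P₂ : H →L[ℂ] H) : H →ₗ[ℂ] H)), f (g x) = x := by
    intro x
    apply Subtype.ext
    show Θ (Ξ (x : H)) = (x : H)
    exact keyThetaXi (x : H) ((hSP (x : H)).mp x.2)
  have hgf : ∀ x : (LinearMap.range ((1 - Q₁ - Q₂ : H →L[ℂ] H) : H →ₗ[ℂ] H)), g (f x) = x := by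
    intro x
    apply Subtype.ext
    show Ξ (Θ (x : H)) = (x : H)
    exact keyXiTheta (x : H) ((hSQ (x : H)).mp x.2)
  let e : (LinearMap.range ((1 - Q₁ - Q₂ : H →L[ℂ] H) : H →ₗ[ℂ] H)) ≃ₗ[ℂ]
      (LinearMap.range ((1 - P₁ - P₂ : H →L[ℂ] H) : H →ₗ[ℂ] H)) :=
    LinearEquiv.ofLinear f g (LinearMap.ext hfg) (LinearMap.ext hgf)
  exact (LinearEquiv.rank_eq e).symm
end

section
/- If P, Q₁, Q₂ are orthogonal projections on a Hilbert space with Q₁ < Q₂ (i.e., ran(Q₁) is properly contained in ran(Q₂)), then max(‖P − Q₁‖, ‖P − Q₂‖) = 1. -/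
open ContinuousLinearMap

lemma proj_isSA_sq {H : Type*} [NormedAddCommGroup H] [InnerProductSpace ℂ H]
    [CompleteSpace H] (A : H →L[ℂ] H) (hA : IsSelfAdjoint A) (x : H) :
    ‖A x‖ ^ 2 = RCLike.re (inner ℂ x ((A * A) x) : ℂ) := by
  rw [ContinuousLinearMap.mul_apply, ← hA.adjoint_eq,
    ContinuousLinearMap.adjoint_inner_right, hA.adjoint_eq, inner_self_eq_norm_sq]

lemma proj_diff_norm_le_one {H : Type*} [NormedAddCommGroup H] [InnerProductSpace ℂ H]
    [CompleteSpace H] (P Q : H →L[ℂ] H)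
    (hPsa : IsSelfAdjoint P) (hP2 : P * P = P)
    (hQsa : IsSelfAdjoint Q) (hQ2 : Q * Q = Q) : ‖P - Q‖ ≤ 1 := by
  apply ContinuousLinearMap.opNorm_le_bound _ zero_le_one
  intro x
  rw [one_mul]
  have hA : IsSelfAdjoint (P - Q) := hPsa.sub hQsa
  have hB : IsSelfAdjoint (1 - P - Q : H →L[ℂ] H) :=
    ((IsSelfAdjoint.one (H →L[ℂ] H)).sub hPsa).sub hQsa
  have key : (P - Q) * (P - Q) + (1 - P - Q) * (1 - P - Q) = 1 := by
    have expand : (P - Q) * (P - Q) + (1 - P - Q) * (1 - P - Q)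
        = 2 * (P * P) + 2 * (Q * Q) - 2 * P - 2 * Q + 1 := by noncomm_ring
    rw [expand, hP2, hQ2]; noncomm_ring
  have h1 := proj_isSA_sq (P - Q) hA x
  have h2 := proj_isSA_sq (1 - P - Q) hB x
  have hsum : ‖(P - Q) x‖ ^ 2 + ‖(1 - P - Q : H →L[ℂ] H) x‖ ^ 2 = ‖x‖ ^ 2 := by
    rw [h1, h2, ← map_add, ← inner_add_right, ← ContinuousLinearMap.add_apply, key,
      ContinuousLinearMap.one_apply, inner_self_eq_norm_sq]
  nlinarith [norm_nonneg ((P - Q) x), norm_nonneg x,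
    sq_nonneg (‖(1 - P - Q : H →L[ℂ] H) x‖)]

/-- If `P`, `Q₁`, `Q₂` are orthogonal projections with `Q₁ < Q₂` (range of `Q₁` properly
contained in range of `Q₂`, i.e. `Q₂ Q₁ = Q₁` and `Q₁ ≠ Q₂`), then
`max ‖P - Q₁‖ ‖P - Q₂‖ = 1`. -/
theorem stmt3 {H : Type*} [NormedAddCommGroup H] [InnerProductSpace ℂ H]
    [CompleteSpace H]
    (P Q₁ Q₂ : H →L[ℂ] H)
    (hPsa : IsSelfAdjoint P) (hP2 : P ∘L P = P)
    (hQ₁sa : IsSelfAdjoint Q₁) (hQ₁2 : Q₁ ∘L Q₁ = Q₁)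
    (hQ₂sa : IsSelfAdjoint Q₂) (hQ₂2 : Q₂ ∘L Q₂ = Q₂)
    (hle : Q₂ ∘L Q₁ = Q₁) (hne : Q₁ ≠ Q₂) :
    max ‖P - Q₁‖ ‖P - Q₂‖ = 1 := by
  have hP2' : P * P = P := hP2
  have hQ₁2' : Q₁ * Q₁ = Q₁ := hQ₁2
  have hQ₂2' : Q₂ * Q₂ = Q₂ := hQ₂2
  have hle' : Q₂ * Q₁ = Q₁ := hle
  have h1 : ‖P - Q₁‖ ≤ 1 := proj_diff_norm_le_one P Q₁ hPsa hP2' hQ₁sa hQ₁2'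
  have h2 : ‖P - Q₂‖ ≤ 1 := proj_diff_norm_le_one P Q₂ hPsa hP2' hQ₂sa hQ₂2'
  -- Q₁ * Q₂ = Q₁, by taking adjoints
  have hQ₁Q₂ : Q₁ * Q₂ = Q₁ := by
    have := congrArg star hle'
    rwa [star_mul, hQ₁sa.star_eq, hQ₂sa.star_eq] at this
  have key : 1 ≤ ‖P - Q₁‖ ∨ 1 ≤ ‖P - Q₂‖ := by
    by_contra hcon
    push_neg at hcon
    obtain ⟨ha, hb⟩ := hcon
    -- find x with Q₂ x = x, Q₁ x = 0, x ≠ 0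
    obtain ⟨v, hv⟩ : ∃ v, Q₂ v - Q₁ v ≠ 0 := by
      by_contra h
      push_neg at h
      exact hne (by ext v; exact (sub_eq_zero.mp (h v)).symm)
    set x := Q₂ v - Q₁ v with hxdef
    have app : ∀ (A B C : H →L[ℂ] H) (u : H), A * B = C → A (B u) = C u := by
      intro A B C u hAB
      have := DFunLike.congr_fun hAB u
      simpa [ContinuousLinearMap.mul_apply] using this
    have happ : ∀ (A B : H →L[ℂ] H) (u : H), (A * B) u = A (B u) := fun A B u =>
      ContinuousLinearMap.mul_apply A B u
    have hQ₂x : Q₂ x = x := by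
      have e1 := app Q₂ Q₂ Q₂ v hQ₂2'
      have e2 := app Q₂ Q₁ Q₁ v hle'
      simp [hxdef, map_sub, e1, e2]
    have hQ₁x : Q₁ x = 0 := by
      have e1 := app Q₁ Q₂ Q₁ v hQ₁Q₂
      have e2 := app Q₁ Q₁ Q₁ v hQ₁2'
      simp [hxdef, map_sub, e1, e2]
    -- the perturbation D
    set D : H →L[ℂ] H := Q₁ - Q₁ * P * Q₁ with hDdef
    have hQ₁norm : ‖Q₁‖ ≤ 1 := by
      have := proj_diff_norm_le_one Q₁ 0 hQ₁sa hQ₁2' (IsSelfAdjoint.zero _) (by simp)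
      simpa using this
    have hDnorm : ‖D‖ < 1 := by
      have hDeq : D = Q₁ * ((Q₁ - P) * Q₁) := by
        have : Q₁ * ((Q₁ - P) * Q₁) = Q₁ * Q₁ * Q₁ - Q₁ * P * Q₁ := by noncomm_ring
        rw [this, hQ₁2', hQ₁2', hDdef]
      calc ‖D‖ ≤ ‖Q₁‖ * ‖(Q₁ - P) * Q₁‖ := by rw [hDeq]; exact norm_mul_le _ _
        _ ≤ ‖Q₁‖ * (‖Q₁ - P‖ * ‖Q₁‖) := by
            have := norm_mul_le (Q₁ - P) Q₁
            exact mul_le_mul_of_nonneg_left this (norm_nonneg _)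
        _ ≤ 1 * (‖Q₁ - P‖ * 1) := by
            apply mul_le_mul hQ₁norm _ (by positivity) zero_le_one
            exact mul_le_mul_of_nonneg_left hQ₁norm (norm_nonneg _)
        _ = ‖P - Q₁‖ := by rw [one_mul, mul_one, norm_sub_rev]
        _ < 1 := ha
    set G : (H →L[ℂ] H)ˣ := Units.oneSub D hDnorm with hGdef
    have hGval : (G : H →L[ℂ] H) = 1 - D := rfl
    have hQ₁D : Q₁ * D = D := by
      simp only [hDdef, mul_sub, ← mul_assoc, hQ₁2']
    have hDQ₁ : D * Q₁ = D := by
      simp only [hDdef, sub_mul, mul_assoc, hQ₁2']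
    have hcommG : Commute Q₁ (G : H →L[ℂ] H) := by
      show Q₁ * (G : H →L[ℂ] H) = (G : H →L[ℂ] H) * Q₁
      rw [hGval, mul_sub, sub_mul, one_mul, mul_one, hQ₁D, hDQ₁]
    have hcomm : Commute Q₁ ((G⁻¹ : (H →L[ℂ] H)ˣ) : H →L[ℂ] H) :=
      hcommG.units_inv_right
    set E : H →L[ℂ] H := ((G⁻¹ : (H →L[ℂ] H)ˣ) : H →L[ℂ] H) with hEdef
    set y : H := E (Q₁ (P x)) with hydef
    have hQ₁y : Q₁ y = y := by
      rw [hydef, ← happ Q₁ E, hcomm, happ, app Q₁ Q₁ Q₁ _ hQ₁2']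
    -- key operator identity : (Q₁ * P * Q₁) * E = Q₁
    have hopid : (Q₁ * P * Q₁) * E = Q₁ := by
      have e1 : Q₁ * P * Q₁ = Q₁ * (1 - D) := by
        rw [mul_sub, mul_one, hQ₁D, hDdef]; noncomm_ring
      rw [e1, ← hGval, mul_assoc, hEdef, Units.mul_inv, mul_one]
    have step5 : Q₁ (P y) = Q₁ (P x) := by
      have e : (Q₁ * P * Q₁) y = Q₁ (P y) := by
        rw [happ (Q₁ * P) Q₁ y, hQ₁y, happ]
      have e2 : (Q₁ * P * Q₁) y = Q₁ (P x) := by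
        rw [hydef, ← happ (Q₁ * P * Q₁) E _, hopid]
        exact app Q₁ Q₁ Q₁ (P x) hQ₁2'
      exact e.symm.trans e2
    have step6 : P y = P x := by
      set w : H := P y - P x with hwdef
      have hPw : P w = w := by
        rw [hwdef, map_sub, app P P P _ hP2', app P P P _ hP2']
      have hQ₁w : Q₁ w = 0 := by rw [hwdef, map_sub, step5, sub_self]
      have hw : (P - Q₁) w = w := by
        rw [ContinuousLinearMap.sub_apply, hPw, hQ₁w, sub_zero]
      have hle2 : ‖w‖ ≤ ‖P - Q₁‖ * ‖w‖ := by
        conv_lhs => rw [← hw]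
        exact (P - Q₁).le_opNorm w
      have hw0 : w = 0 := by
        by_contra hw0
        have : (0:ℝ) < ‖w‖ := norm_pos_iff.mpr hw0
        nlinarith
      exact sub_eq_zero.mp hw0
    have hQ₂y : Q₂ y = y := by
      conv_lhs => rw [← hQ₁y]
      rw [app Q₂ Q₁ Q₁ _ hle', hQ₁y]
    set z : H := x - y with hzdef
    have hPz : P z = 0 := by rw [hzdef, map_sub, step6, sub_self]
    have hQ₂z : Q₂ z = z := by rw [hzdef, map_sub, hQ₂x, hQ₂y]
    have hz : (P - Q₂) z = -z := by
      rw [ContinuousLinearMap.sub_apply, hPz, hQ₂z, zero_sub]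
    have hle3 : ‖z‖ ≤ ‖P - Q₂‖ * ‖z‖ := by
      have := (P - Q₂).le_opNorm z
      rwa [hz, norm_neg] at this
    have hz0 : z = 0 := by
      by_contra hz0
      have : (0:ℝ) < ‖z‖ := norm_pos_iff.mpr hz0
      nlinarith
    have hxy : x = y := sub_eq_zero.mp hz0
    have : x = 0 := by rw [← hQ₁x, hxy, hQ₁y]
    exact hv this
  rcases key with h | h
  · rw [le_antisymm h1 h]
    exact max_eq_left h2
  · rw [le_antisymm h2 h]
    exact max_eq_right h1
end

section
/- For any two orthogonal projections P and Q on a Hilbert space, ‖P − Q‖ = max(‖PQᗮ‖, ‖PᗮQ‖), where Rᗮ = I − R. -/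
open ContinuousLinearMap
open scoped InnerProductSpace

private lemma proj_norm_apply_le {H : Type*} [NormedAddCommGroup H] [InnerProductSpace ℂ H]
    [CompleteSpace H] (R : H →L[ℂ] H) (hsa : IsSelfAdjoint R) (h2 : R ∘L R = R) (x : H) :
    ‖R x‖ ≤ ‖x‖ := by
  have h1 : ⟪R x, R x⟫_ℂ = ⟪x, R x⟫_ℂ := by
    have hRR : R (R x) = R x := by rw [← comp_apply, h2]
    have := hsa.isSymmetric x (R x)
    simp only [ContinuousLinearMap.coe_coe] at this
    rw [this, hRR]
  have h2' : ‖R x‖ ^ 2 = ‖⟪x, R x⟫_ℂ‖ := by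
    rw [← h1, inner_self_eq_norm_sq_to_K]
    simp [sq_abs]
  have h3 : ‖⟪x, R x⟫_ℂ‖ ≤ ‖x‖ * ‖R x‖ := by
    simpa using norm_inner_le_norm (𝕜 := ℂ) x (R x)
  nlinarith [norm_nonneg (R x), norm_nonneg x]

/-- For orthogonal projections `P`, `Q` on a Hilbert space,
`‖P - Q‖ = max ‖P Qᗮ‖ ‖Pᗮ Q‖`. -/
theorem stmt4 {H : Type*} [NormedAddCommGroup H] [InnerProductSpace ℂ H]
    [CompleteSpace H]
    (P Q : H →L[ℂ] H)
    (hPsa : IsSelfAdjoint P) (hP2 : P ∘L P = P)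
    (hQsa : IsSelfAdjoint Q) (hQ2 : Q ∘L Q = Q) :
    ‖P - Q‖ = max ‖P ∘L (1 - Q)‖ ‖(1 - P) ∘L Q‖ := by
  set A := P ∘L (1 - Q) with hA
  set B := (1 - P) ∘L Q with hB
  have hP2' : P * P = P := hP2
  have hQ2' : Q * Q = Q := hQ2
  have hQ'sa : IsSelfAdjoint ((1 : H →L[ℂ] H) - Q) := (IsSelfAdjoint.one _).sub hQsa
  have hP'sa : IsSelfAdjoint ((1 : H →L[ℂ] H) - P) := (IsSelfAdjoint.one _).sub hPsa
  have hQ'2 : ((1 : H →L[ℂ] H) - Q) ∘L (1 - Q) = 1 - Q := by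
    show ((1 : H →L[ℂ] H) - Q) * (1 - Q) = 1 - Q
    noncomm_ring [hQ2']
  have hP'2 : ((1 : H →L[ℂ] H) - P) ∘L (1 - P) = 1 - P := by
    show ((1 : H →L[ℂ] H) - P) * (1 - P) = 1 - P
    noncomm_ring [hP2']
  -- pointwise pythagoras
  have key : ∀ x : H, ‖(P - Q) x‖ ^ 2 = ‖A x‖ ^ 2 + ‖B x‖ ^ 2 := by
    intro x
    have hsplit : (P - Q) x = A x - B x := by
      have : P - Q = A - B := by
        rw [hA, hB]; show P - Q = P * (1 - Q) - (1 - P) * Q; noncomm_ring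
      rw [this]; simp
    have hperp : ⟪A x, B x⟫_ℂ = 0 := by
      have : ⟪A x, B x⟫_ℂ = ⟪(1 - Q) x, (P ∘L ((1 - P) ∘L Q)) x⟫_ℂ := by
        rw [hA, hB]
        simp only [comp_apply]
        exact hPsa.isSymmetric _ _
      rw [this]
      have hzero : P ∘L ((1 - P) ∘L Q) = 0 := by
        show P * ((1 - P) * Q) = 0
        noncomm_ring
        rw [← mul_assoc, hP2']
        simp
      rw [hzero]
      simp
    rw [hsplit, @norm_sub_sq ℂ]
    simp [hperp]
  have hxsplit : ∀ x : H, ‖(1 - Q) x‖ ^ 2 + ‖Q x‖ ^ 2 = ‖x‖ ^ 2 := by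
    intro x
    have hperp : ⟪(1 - Q) x, Q x⟫_ℂ = 0 := by
      have : ⟪(1 - Q) x, Q x⟫_ℂ = ⟪x, ((1 - Q) ∘L Q) x⟫_ℂ := by
        simp only [comp_apply]
        exact hQ'sa.isSymmetric _ _
      rw [this]
      have hzero : ((1 : H →L[ℂ] H) - Q) ∘L Q = 0 := by
        show ((1 : H →L[ℂ] H) - Q) * Q = 0
        noncomm_ring [hQ2']
      rw [hzero]
      simp
    have : x = (1 - Q) x + Q x := by simp
    conv_rhs => rw [this]
    rw [@norm_add_sq ℂ]
    simp only [ContinuousLinearMap.sub_apply, ContinuousLinearMap.one_apply] at hperp ⊢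
    rw [hperp]
    simp
  set M := max ‖A‖ ‖B‖ with hM
  have hM0 : 0 ≤ M := le_trans (norm_nonneg A) (le_max_left _ _)
  apply le_antisymm
  · -- upper bound
    apply opNorm_le_bound _ hM0
    intro x
    have hAx : ‖A x‖ ≤ ‖A‖ * ‖(1 - Q) x‖ := by
      have : A x = A ((1 - Q) x) := by
        rw [hA]; simp only [comp_apply]
        rw [← comp_apply (1 - Q) (1 - Q), hQ'2]
      rw [this]; exact le_opNorm A _
    have hBx : ‖B x‖ ≤ ‖B‖ * ‖Q x‖ := by
      have : B x = B (Q x) := by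
        rw [hB]; simp only [comp_apply]
        rw [← comp_apply Q Q, hQ2]
      rw [this]; exact le_opNorm B _
    have hAM : ‖A‖ ≤ M := le_max_left _ _
    have hBM : ‖B‖ ≤ M := le_max_right _ _
    have hA1 : ‖A x‖ ≤ M * ‖(1 - Q) x‖ :=
      hAx.trans (mul_le_mul_of_nonneg_right hAM (norm_nonneg _))
    have hB1 : ‖B x‖ ≤ M * ‖Q x‖ :=
      hBx.trans (mul_le_mul_of_nonneg_right hBM (norm_nonneg _))
    have hA2 : ‖A x‖ ^ 2 ≤ (M * ‖(1 - Q) x‖) ^ 2 := pow_le_pow_left₀ (norm_nonneg _) hA1 2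
    have hB2 : ‖B x‖ ^ 2 ≤ (M * ‖Q x‖) ^ 2 := pow_le_pow_left₀ (norm_nonneg _) hB1 2
    have hsq : ‖(P - Q) x‖ ^ 2 ≤ (M * ‖x‖) ^ 2 := by
      rw [key x]
      calc ‖A x‖ ^ 2 + ‖B x‖ ^ 2 ≤ M ^ 2 * (‖(1 - Q) x‖ ^ 2 + ‖Q x‖ ^ 2) := by
            rw [mul_pow] at hA2 hB2; linarith
        _ = (M * ‖x‖) ^ 2 := by rw [hxsplit x]; ring
    have := Real.sqrt_le_sqrt hsq
    rwa [Real.sqrt_sq (norm_nonneg _), Real.sqrt_sq (mul_nonneg hM0 (norm_nonneg x))] at this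
  · -- lower bound
    have hQ'n : ‖(1 : H →L[ℂ] H) - Q‖ ≤ 1 := by
      apply opNorm_le_bound _ zero_le_one
      intro x
      simpa using proj_norm_apply_le _ hQ'sa hQ'2 x
    have hP'n : ‖(1 : H →L[ℂ] H) - P‖ ≤ 1 := by
      apply opNorm_le_bound _ zero_le_one
      intro x
      simpa using proj_norm_apply_le _ hP'sa hP'2 x
    apply max_le
    · have hfac : A = (P - Q) ∘L (1 - Q) := by
        rw [hA]; show P * (1 - Q) = (P - Q) * (1 - Q); noncomm_ring [hQ2']
      calc ‖A‖ = ‖(P - Q) ∘L (1 - Q)‖ := by rw [hfac]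
        _ ≤ ‖P - Q‖ * ‖(1 : H →L[ℂ] H) - Q‖ := opNorm_comp_le _ _
        _ ≤ ‖P - Q‖ * 1 := by
            exact mul_le_mul_of_nonneg_left hQ'n (norm_nonneg _)
        _ = ‖P - Q‖ := mul_one _
    · have hfac : B = (1 - P) ∘L (Q - P) := by
        rw [hB]; show (1 - P) * Q = (1 - P) * (Q - P); noncomm_ring [hP2']
      calc ‖B‖ = ‖(1 - P) ∘L (Q - P)‖ := by rw [hfac]
        _ ≤ ‖(1 : H →L[ℂ] H) - P‖ * ‖Q - P‖ := opNorm_comp_le _ _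
        _ ≤ 1 * ‖Q - P‖ := by
            exact mul_le_mul_of_nonneg_right hP'n (norm_nonneg _)
        _ = ‖P - Q‖ := by rw [one_mul, norm_sub_rev]
end

section
/- If P and Q are orthogonal projections on a Hilbert space with ‖P − Q‖ < 1, then ‖P(I−Q)‖ = ‖(I−P)Q‖. -/
open ContinuousLinearMap

/-- If `P` and `Q` are orthogonal projections with `‖P - Q‖ < 1`, then
`‖P (I - Q)‖ = ‖(I - P) Q‖`. -/
theorem stmt5 {H : Type*} [NormedAddCommGroup H] [InnerProductSpace ℂ H]
    [CompleteSpace H]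
    (P Q : H →L[ℂ] H)
    (hPsa : IsSelfAdjoint P) (hP2 : P ∘L P = P)
    (hQsa : IsSelfAdjoint Q) (hQ2 : Q ∘L Q = Q)
    (hPQ : ‖P - Q‖ < 1) :
    ‖P ∘L (1 - Q)‖ = ‖(1 - P) ∘L Q‖ := by
  have hP : P * P = P := hP2
  have hQ : Q * Q = Q := hQ2
  set K : H →L[ℂ] H := P + Q - 1 with hKdef
  -- K² = 1 - (P-Q)²
  have hK2 : K * K = 1 - (P - Q) * (P - Q) := by
    simp only [hKdef, mul_sub, sub_mul, mul_add, add_mul, mul_one, one_mul, hP, hQ]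
    abel
  -- (P-Q)² has norm < 1
  have hnormR : ‖(P - Q) * (P - Q)‖ < 1 := by
    calc ‖(P - Q) * (P - Q)‖ ≤ ‖P - Q‖ * ‖P - Q‖ := norm_mul_le _ _
    _ < 1 := by nlinarith [norm_nonneg (P - Q)]
  -- K is a unit
  have hKunit : IsUnit K := by
    set u : (H →L[ℂ] H)ˣ := Units.oneSub ((P - Q) * (P - Q)) hnormR with hudef
    have hu : (u : H →L[ℂ] H) = K * K := by rw [hudef, Units.val_oneSub, hK2]
    have hcomm : Commute K (((u⁻¹ : (H →L[ℂ] H)ˣ)) : H →L[ℂ] H) := by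
      have h1 : Commute K ((u : (H →L[ℂ] H)ˣ) : H →L[ℂ] H) := by
        rw [hu]; exact (Commute.refl K).mul_right (Commute.refl K)
      exact h1.units_inv_right
    refine ⟨⟨K, K * ((u⁻¹ : (H →L[ℂ] H)ˣ) : H →L[ℂ] H), ?_, ?_⟩, rfl⟩
    · rw [← mul_assoc, ← hu, u.mul_inv]
    · rw [mul_assoc, ← hcomm.eq, ← mul_assoc, ← hu, u.mul_inv]
  obtain ⟨k, hk⟩ := hKunit
  -- intertwining relations
  have hKQ : K * Q = P * K := by
    simp only [hKdef, sub_mul, mul_sub, add_mul, mul_add, one_mul, mul_one, hP, hQ]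
    abel
  have hKP : K * P = Q * K := by
    simp only [hKdef, sub_mul, mul_sub, add_mul, mul_add, one_mul, mul_one, hP, hQ]
    abel
  -- the key similarity
  have hsim : ((1 - Q) * P * (1 - Q)) * K = K * ((1 - P) * Q * (1 - P)) := by
    have e2 : (1 - Q) * K = K * (1 - P) := by
      simp only [sub_mul, mul_sub, one_mul, mul_one, hKP]
    calc ((1 - Q) * P * (1 - Q)) * K = (1 - Q) * P * ((1 - Q) * K) := by
          rw [mul_assoc]
      _ = (1 - Q) * (P * K) * (1 - P) := by rw [e2, ← mul_assoc, mul_assoc _ P K]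
      _ = ((1 - Q) * K) * Q * (1 - P) := by rw [← hKQ, ← mul_assoc, mul_assoc _ K Q]
      _ = K * ((1 - P) * Q * (1 - P)) := by rw [e2]; simp only [mul_assoc]
  have hconj : (1 - P) * Q * (1 - P) = ((k⁻¹ : (H →L[ℂ] H)ˣ) : H →L[ℂ] H) * ((1 - Q) * P * (1 - Q)) * (k : H →L[ℂ] H) := by
    have : ((k⁻¹ : (H →L[ℂ] H)ˣ) : H →L[ℂ] H) * (((1 - Q) * P * (1 - Q)) * (k : H →L[ℂ] H)) =
        ((k⁻¹ : (H →L[ℂ] H)ˣ) : H →L[ℂ] H) * ((k : H →L[ℂ] H) * ((1 - P) * Q * (1 - P))) := by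
      rw [hk, hsim]
    conv_rhs => rw [mul_assoc]
    rw [this, ← mul_assoc, k.inv_mul, one_mul]
  -- spectra coincide
  have hspec : spectrum ℂ ((1 - Q) * P * (1 - Q)) = spectrum ℂ ((1 - P) * Q * (1 - P)) := by
    rw [hconj, spectrum.units_conjugate']
  -- selfadjointness
  have hXsa : IsSelfAdjoint ((1 - Q) * P * (1 - Q)) := by
    rw [IsSelfAdjoint]
    simp only [star_mul, star_sub, star_one, hPsa.star_eq, hQsa.star_eq, mul_assoc]
  have hYsa : IsSelfAdjoint ((1 - P) * Q * (1 - P)) := by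
    rw [IsSelfAdjoint]
    simp only [star_mul, star_sub, star_one, hPsa.star_eq, hQsa.star_eq, mul_assoc]
  -- equal norms of the selfadjoint products
  have hnn : ‖(1 - Q) * P * (1 - Q)‖₊ = ‖(1 - P) * Q * (1 - P)‖₊ := by
    have := hXsa.spectralRadius_eq_nnnorm
    rw [spectralRadius, hspec, ← spectralRadius, hYsa.spectralRadius_eq_nnnorm] at this
    exact_mod_cast this.symm
  have hnrm : ‖(1 - Q) * P * (1 - Q)‖ = ‖(1 - P) * Q * (1 - P)‖ := congrArg NNReal.toReal hnn
  -- C*-identities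
  show ‖P * (1 - Q)‖ = ‖(1 - P) * Q‖
  have h1 : ‖P * (1 - Q)‖ * ‖P * (1 - Q)‖ = ‖(1 - Q) * P * (1 - Q)‖ := by
    rw [← CStarRing.norm_star_mul_self (x := P * (1 - Q))]
    congr 1
    simp only [star_mul, star_sub, star_one, hPsa.star_eq, hQsa.star_eq, mul_assoc]
    rw [← mul_assoc P P (1 - Q), hP]
  have h2 : ‖(1 - P) * Q‖ * ‖(1 - P) * Q‖ = ‖(1 - P) * Q * (1 - P)‖ := by
    rw [← CStarRing.norm_self_mul_star (x := (1 - P) * Q)]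
    congr 1
    simp only [star_mul, star_sub, star_one, hPsa.star_eq, hQsa.star_eq, mul_assoc]
    rw [← mul_assoc Q Q (1 - P), hQ]
  nlinarith [norm_nonneg (P * (1 - Q)), norm_nonneg ((1 - P) * Q)]
end

section
/- For orthogonal projections P and Q on a Hilbert space, P − Q = P(I−Q) − (I−P)Q, and since these two summands have pairwise orthogonal initial and final spaces, ‖P − Q‖ = max(‖P(I−Q)‖, ‖(I−P)Q‖). -/
open ContinuousLinearMap

section Aux
variable {H : Type*} [NormedAddCommGroup H] [InnerProductSpace ℂ H] [CompleteSpace H]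

local notation "⟪" x ", " y "⟫" => @inner ℂ _ _ x y

lemma proj_apply_norm_le' (P : H →L[ℂ] H) (hsa : IsSelfAdjoint P) (h2 : P ∘L P = P)
    (x : H) : ‖P x‖ ≤ ‖x‖ := by
  have hPP : P (P x) = P x := by
    have := congrArg (fun T => T x) h2; simpa using this
  have hinner : ⟪P x, P x⟫ = ⟪x, P x⟫ := by
    have h := (ContinuousLinearMap.adjoint_inner_right P x (P x)).symm
    rw [hsa.adjoint_eq, hPP] at h
    exact h
  have key : (‖P x‖ : ℝ) ^ 2 = RCLike.re ⟪x, P x⟫ := by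
    rw [← hinner, inner_self_eq_norm_sq]
  have cs : RCLike.re ⟪x, P x⟫ ≤ ‖x‖ * ‖P x‖ := by
    calc RCLike.re ⟪x, P x⟫ ≤ ‖⟪x, P x⟫‖ := RCLike.re_le_norm _
    _ ≤ ‖x‖ * ‖P x‖ := norm_inner_le_norm _ _
  by_cases h0 : ‖P x‖ = 0
  · rw [h0]; positivity
  · have hpos : 0 < ‖P x‖ := lt_of_le_of_ne (norm_nonneg _) (Ne.symm h0)
    nlinarith [key, cs]

lemma proj_norm_le_one' (P : H →L[ℂ] H) (hsa : IsSelfAdjoint P) (h2 : P ∘L P = P) :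
    ‖P‖ ≤ 1 := by
  refine ContinuousLinearMap.opNorm_le_bound _ zero_le_one fun x => ?_
  simpa using proj_apply_norm_le' P hsa h2 x

lemma proj_ortho' (P : H →L[ℂ] H) (hsa : IsSelfAdjoint P) (h2 : P ∘L P = P)
    (u v : H) : ⟪P u, (1 - P) v⟫ = 0 := by
  have hPP : P (P v) = P v := by
    have := congrArg (fun T => T v) h2; simpa using this
  have hz : P ((1 - P) v) = 0 := by
    simp [ContinuousLinearMap.sub_apply, map_sub, hPP]
  have h := (ContinuousLinearMap.adjoint_inner_right P u ((1 - P) v)).symm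
  rw [hsa.adjoint_eq, hz, inner_zero_right] at h
  exact h.symm.symm

omit [CompleteSpace H] in
lemma pyth' (a b : H) (h : ⟪a, b⟫ = 0) : ‖a - b‖ ^ 2 = ‖a‖ ^ 2 + ‖b‖ ^ 2 := by
  have := norm_sub_sq (𝕜 := ℂ) a b
  rw [h] at this
  simpa using this

end Aux

/-- For orthogonal projections `P`, `Q`: `P - Q = P(I-Q) - (I-P)Q` and
`‖P - Q‖ = max ‖P(I-Q)‖ ‖(I-P)Q‖`. -/
theorem stmt6 {H : Type*} [NormedAddCommGroup H] [InnerProductSpace ℂ H]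
    [CompleteSpace H]
    (P Q : H →L[ℂ] H)
    (hPsa : IsSelfAdjoint P) (hP2 : P ∘L P = P)
    (hQsa : IsSelfAdjoint Q) (hQ2 : Q ∘L Q = Q) :
    P - Q = P ∘L (1 - Q) - (1 - P) ∘L Q ∧
      ‖P - Q‖ = max ‖P ∘L (1 - Q)‖ ‖(1 - P) ∘L Q‖ := by
  set A := P ∘L (1 - Q) with hA
  set B := (1 - P) ∘L Q with hB
  have hPx : ∀ x, P (P x) = P x := fun x => by
    have := congrArg (fun T => T x) hP2; simpa using this
  have hQx : ∀ x, Q (Q x) = Q x := fun x => by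
    have := congrArg (fun T => T x) hQ2; simpa using this
  have hdecomp : P - Q = A - B := by
    rw [hA, hB]; ext x
    simp [ContinuousLinearMap.sub_apply, map_sub]
  have hQ'sa : IsSelfAdjoint (1 - Q : H →L[ℂ] H) := (IsSelfAdjoint.one (H →L[ℂ] H)).sub hQsa
  have hQ'2 : ((1 - Q) ∘L (1 - Q) : H →L[ℂ] H) = 1 - Q := by
    ext x; simp [ContinuousLinearMap.sub_apply, map_sub, hQx]
  have hP'sa : IsSelfAdjoint (1 - P : H →L[ℂ] H) := (IsSelfAdjoint.one (H →L[ℂ] H)).sub hPsa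
  have hP'2 : ((1 - P) ∘L (1 - P) : H →L[ℂ] H) = 1 - P := by
    ext x; simp [ContinuousLinearMap.sub_apply, map_sub, hPx]
  refine ⟨hdecomp, le_antisymm ?_ (max_le ?_ ?_)⟩
  · -- ‖P - Q‖ ≤ max
    set M := max ‖A‖ ‖B‖ with hM
    have hM0 : (0:ℝ) ≤ M := le_max_of_le_left (norm_nonneg _)
    refine ContinuousLinearMap.opNorm_le_bound _ hM0 fun x => ?_
    have horth : @inner ℂ _ _ (A x) (B x) = 0 := by
      have h1 : A x = P ((1 - Q) x) := rfl
      have h2 : B x = (1 - P) (Q x) := rfl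
      rw [h1, h2]; exact proj_ortho' P hPsa hP2 _ _
    have hpyth : ‖(P - Q) x‖ ^ 2 = ‖A x‖ ^ 2 + ‖B x‖ ^ 2 := by
      rw [hdecomp, ContinuousLinearMap.sub_apply]
      exact pyth' _ _ horth
    have hAx : ‖A x‖ ≤ ‖A‖ * ‖(1 - Q : H →L[ℂ] H) x‖ := by
      have h : A x = A ((1 - Q : H →L[ℂ] H) x) := by
        have := congrArg (fun T => T x) (by rw [hA, ContinuousLinearMap.comp_assoc, hQ'2] :
          A ∘L (1 - Q) = A)
        exact this.symm
      rw [h]; exact A.le_opNorm _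
    have hBx : ‖B x‖ ≤ ‖B‖ * ‖Q x‖ := by
      have h : B x = B (Q x) := by
        have := congrArg (fun T => T x) (by rw [hB, ContinuousLinearMap.comp_assoc, hQ2] :
          B ∘L Q = B)
        exact this.symm
      rw [h]; exact B.le_opNorm _
    have hpythQ : ‖Q x‖ ^ 2 + ‖(1 - Q : H →L[ℂ] H) x‖ ^ 2 = ‖x‖ ^ 2 := by
      have horQ : @inner ℂ _ _ (Q x) (-(((1 - Q) : H →L[ℂ] H) x)) = 0 := by
        rw [inner_neg_right, proj_ortho' Q hQsa hQ2 x x]; simp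
      have h := pyth' (Q x) (-(((1 - Q) : H →L[ℂ] H) x)) horQ
      have hsum : Q x - -(((1 - Q) : H →L[ℂ] H) x) = x := by
        simp [ContinuousLinearMap.sub_apply]
      rw [hsum, norm_neg] at h
      exact h.symm
    have hAM : ‖A x‖ ≤ M * ‖(1 - Q : H →L[ℂ] H) x‖ :=
      hAx.trans (mul_le_mul_of_nonneg_right (le_max_left _ _) (norm_nonneg _))
    have hBM : ‖B x‖ ≤ M * ‖Q x‖ :=
      hBx.trans (mul_le_mul_of_nonneg_right (le_max_right _ _) (norm_nonneg _))
    have h1 : ‖A x‖ ^ 2 ≤ M ^ 2 * ‖(1 - Q : H →L[ℂ] H) x‖ ^ 2 := by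
      have := pow_le_pow_left₀ (norm_nonneg _) hAM 2
      rwa [mul_pow] at this
    have h2 : ‖B x‖ ^ 2 ≤ M ^ 2 * ‖Q x‖ ^ 2 := by
      have := pow_le_pow_left₀ (norm_nonneg _) hBM 2
      rwa [mul_pow] at this
    have hsq : ‖(P - Q) x‖ ^ 2 ≤ (M * ‖x‖) ^ 2 := by
      rw [hpyth, mul_pow]
      nlinarith [hpythQ, sq_nonneg M]
    have hMx : (0:ℝ) ≤ M * ‖x‖ := mul_nonneg hM0 (norm_nonneg _)
    exact le_of_pow_le_pow_left₀ two_ne_zero hMx hsq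
  · -- ‖A‖ ≤ ‖P - Q‖
    have hAeq : A = (P ∘L (P - Q)) ∘L (1 - Q) := by
      ext x
      simp [hA, ContinuousLinearMap.sub_apply, map_sub, hPx, hQx]
    calc ‖A‖ ≤ ‖P ∘L (P - Q)‖ * ‖(1 - Q : H →L[ℂ] H)‖ := by
          rw [hAeq]; exact opNorm_comp_le _ _
      _ ≤ (‖P‖ * ‖P - Q‖) * 1 := by
          apply mul_le_mul (opNorm_comp_le _ _) (proj_norm_le_one' _ hQ'sa hQ'2)
            (norm_nonneg _) (by positivity)
      _ ≤ (1 * ‖P - Q‖) * 1 := by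
          have := proj_norm_le_one' P hPsa hP2
          nlinarith [norm_nonneg (P - Q)]
      _ = ‖P - Q‖ := by ring
  · -- ‖B‖ ≤ ‖P - Q‖
    have hBeq : B = ((1 - P) ∘L (Q - P)) ∘L Q := by
      ext x
      simp [hB, ContinuousLinearMap.sub_apply, map_sub, hPx, hQx]
    calc ‖B‖ ≤ ‖(1 - P) ∘L (Q - P)‖ * ‖Q‖ := by
          rw [hBeq]; exact opNorm_comp_le _ _
      _ ≤ (‖(1 - P : H →L[ℂ] H)‖ * ‖Q - P‖) * 1 := by
          apply mul_le_mul (opNorm_comp_le _ _) (proj_norm_le_one' _ hQsa hQ2)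
            (norm_nonneg _) (by positivity)
      _ ≤ (1 * ‖Q - P‖) * 1 := by
          have := proj_norm_le_one' _ hP'sa hP'2
          nlinarith [norm_nonneg (Q - P)]
      _ = ‖P - Q‖ := by rw [norm_sub_rev]; ring
end

section
/- Suppose M and N are nests on a Hilbert space with Hausdorff distance d(M, N) < 1 (each projection of one nest is within distance < 1 of some projection of the other). Then for each P in M there is a unique Q in N with ‖P − Q‖ < 1, and the resulting map θ : M → N is an order-preserving bijection. -/
/-!
If a projection `e` is within distance `< 1` of a projection `f`, then `‖e (1 - f) e‖ < 1`, so
`e f e = e (1 - e (1 - f) e)` has a right inverse in the corner `e A`: `e` maps `ran f` onto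
`ran e`. Symmetrically `e` is injective on `ran f'` for every projection `f'` within `< 1` of it.
Hence if `f ≤ f'` are both within `< 1` of `e`, each vector of `ran f'` has the same image under
`e` as a vector of `ran f`, so it lies in `ran f` and `f = f'`. As nests are chains, this gives
the uniqueness of `θ P`, the injectivity of `θ`, and its surjectivity by the Hausdorff bound in the
other direction. For monotonicity, if `P ≤ P'` but `θ P' ≤ θ P`, the Hilbert space estimate
`‖E - F‖ ≤ max ‖E (1 - F)‖ ‖(1 - E) F‖` gives `‖P - θ P'‖ < 1`, so `θ P' = θ P`.
-/

open ContinuousLinearMap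

/-- A nest on a Hilbert space: a chain of orthogonal projections containing `0` and `1`,
closed under arbitrary intersections (infima of ranges) and closed spans (closures of
suprema of ranges). -/
structure IsNest {H : Type*} [NormedAddCommGroup H] [InnerProductSpace ℂ H]
    [CompleteSpace H] (𝒩 : Set (H →L[ℂ] H)) : Prop where
  selfAdjoint : ∀ P ∈ 𝒩, IsSelfAdjoint P
  idem : ∀ P ∈ 𝒩, P ∘L P = P
  chain : ∀ P ∈ 𝒩, ∀ Q ∈ 𝒩, Q ∘L P = P ∨ P ∘L Q = Q
  zero_mem : 0 ∈ 𝒩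
  one_mem : 1 ∈ 𝒩
  inf_mem : ∀ S ⊆ 𝒩, ∃ P ∈ 𝒩, LinearMap.range (P : H →ₗ[ℂ] H) = ⨅ Q ∈ S, LinearMap.range (Q : H →ₗ[ℂ] H)
  sup_mem : ∀ S ⊆ 𝒩, ∃ P ∈ 𝒩,
    LinearMap.range (P : H →ₗ[ℂ] H) = (⨆ Q ∈ S, LinearMap.range (Q : H →ₗ[ℂ] H)).topologicalClosure

section BanachRing
variable {A : Type*} [NormedRing A]

theorem eq_zero_of_mul_eq_self_of_norm_lt_one {a z : A} (ha : ‖a‖ < 1) (h : a * z = z) :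
    z = 0 := by
  have hz : ‖z‖ ≤ ‖a‖ * ‖z‖ := by simpa only [h] using norm_mul_le a z
  exact norm_le_zero_iff.mp (by nlinarith [norm_nonneg z])

theorem IsIdempotentElem.exists_mul_eq_of_norm_lt_one [CompleteSpace A] {e f : A}
    (he : IsIdempotentElem e) (h : ‖e * (1 - f) * e‖ < 1) : ∃ r, e * f * e * r = e := by
  refine ⟨↑(Units.oneSub _ h)⁻¹, ?_⟩
  have hcorner : e * f * e = e * (1 - e * (1 - f) * e) := by
    simp only [mul_sub, sub_mul, mul_one, ← mul_assoc, he.eq]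
    abel
  have hinv : (1 - e * (1 - f) * e) * ↑(Units.oneSub _ h)⁻¹ = 1 := (Units.oneSub _ h).mul_inv
  rw [hcorner, mul_assoc, hinv, mul_one]

end BanachRing

theorem IsSelfAdjoint.mul_eq_right_of_mul_eq_left {R : Type*} [Mul R] [StarMul R] {p q : R}
    (hp : IsSelfAdjoint p) (hq : IsSelfAdjoint q) (h : q * p = p) : p * q = p := by
  simpa only [star_mul, hp.star_eq, hq.star_eq] using congr(star $h)

section CStarRing
variable {A : Type*} [NormedRing A] [StarRing A] [CStarRing A] {e f f' : A}

theorem IsStarProjection.norm_mul_one_sub_le (hf : IsStarProjection f) :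
    ‖e * (1 - f)‖ ≤ ‖e - f‖ :=
  calc ‖e * (1 - f)‖ = ‖(e - f) * (1 - f)‖ := by rw [sub_mul _ f, hf.mul_one_sub_self, sub_zero]
    _ ≤ ‖e - f‖ * ‖1 - f‖ := norm_mul_le _ _
    _ ≤ ‖e - f‖ := mul_le_of_le_one_right (norm_nonneg _) (hf.one_sub.norm_le _)

theorem IsStarProjection.norm_one_sub_mul_le (he : IsStarProjection e) :
    ‖(1 - e) * f‖ ≤ ‖e - f‖ :=
  calc ‖(1 - e) * f‖ = ‖(1 - e) * (f - e)‖ := by rw [mul_sub _ f, he.one_sub_mul_self, sub_zero]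
    _ ≤ ‖1 - e‖ * ‖f - e‖ := norm_mul_le _ _
    _ ≤ ‖e - f‖ := by
      rw [norm_sub_rev f]; exact mul_le_of_le_one_left (norm_nonneg _) (he.one_sub.norm_le _)

theorem IsStarProjection.norm_mul_one_sub_mul_lt_one (hf : IsStarProjection f)
    (h : ‖e - f‖ < 1) : ‖e * (1 - f) * e‖ < 1 := by
  have hsplit : e * (1 - f) * e = e * (1 - f) * ((1 - f) * e) := by
    simp only [mul_assoc]
    rw [← mul_assoc (1 - f) (1 - f) e, hf.one_sub.isIdempotentElem.eq]
  have h₁ := hf.norm_mul_one_sub_le (e := e)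
  have h₂ : ‖(1 - f) * e‖ ≤ ‖e - f‖ := norm_sub_rev e f ▸ hf.norm_one_sub_mul_le
  rw [hsplit]
  calc _ ≤ ‖e * (1 - f)‖ * ‖(1 - f) * e‖ := norm_mul_le _ _
    _ < 1 := by nlinarith [norm_nonneg (e * (1 - f)), norm_nonneg ((1 - f) * e)]

theorem IsStarProjection.eq_of_mul_eq_of_norm_sub_lt_one [CompleteSpace A]
    (he : IsStarProjection e) (hf : IsStarProjection f) (hf' : IsStarProjection f')
    (hle : f' * f = f) (h : ‖e - f‖ < 1) (h' : ‖e - f'‖ < 1) : f = f' := by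
  obtain ⟨r, hr⟩ := he.isIdempotentElem.exists_mul_eq_of_norm_lt_one
    (hf.norm_mul_one_sub_mul_lt_one h)
  have hle' : f * f' = f :=
    hf.isSelfAdjoint.mul_eq_right_of_mul_eq_left hf'.isSelfAdjoint hle
  set y := f' * (1 - f)
  -- `e y ∈ e (ran f)`, so `z` lies in `ran f'` and is killed by `e`
  set z := y - f * (e * r * y)
  have hez : e * z = 0 := by
    have hey : e * y = e * f * (e * r * y) := by
      conv_lhs => rw [← hr]
      simp only [mul_assoc]
    simp only [z, mul_sub, hey, ← mul_assoc, sub_self]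
  have hf'z : f' * z = z := by
    simp only [z, y, mul_sub, ← mul_assoc, hf'.isIdempotentElem.eq, hle]
  have hz : z = 0 := by
    refine eq_zero_of_mul_eq_self_of_norm_lt_one
      (he.norm_mul_one_sub_mul_lt_one (norm_sub_rev e f' ▸ h')) ?_
    calc f' * (1 - e) * f' * z = f' * ((1 - e) * (f' * z)) := by simp only [mul_assoc]
      _ = z := by rw [hf'z, sub_mul, one_mul, hez, sub_zero, hf'z]
  have hy : y = 0 := by
    have hfy : f * y = 0 := by
      simp only [y, ← mul_assoc, hle', hf.mul_one_sub_self]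
    have hyf : y = f * (e * r * y) := sub_eq_zero.mp hz
    calc y = f * (e * r * y) := hyf
      _ = f * (f * (e * r * y)) := by rw [← mul_assoc f f, hf.isIdempotentElem.eq]
      _ = 0 := by rw [← hyf, hfy]
  have hy' : f' * (1 - f) = 0 := hy
  rw [mul_one_sub, hle, sub_eq_zero] at hy'
  exact hy'.symm

end CStarRing

section HilbertSpace
variable {𝕜 H : Type*} [RCLike 𝕜] [NormedAddCommGroup H] [InnerProductSpace 𝕜 H] [CompleteSpace H]
  {e e' f f' : H →L[𝕜] H}

theorem IsStarProjection.norm_apply_sq_add_norm_one_sub_apply_sq (he : IsStarProjection e)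
    (x : H) : ‖e x‖ ^ 2 + ‖(1 - e) x‖ ^ 2 = ‖x‖ ^ 2 := by
  have horth : inner 𝕜 (e x) ((1 - e) x) = 0 := by
    have := he.isSelfAdjoint.isSymmetric x ((1 - e) x)
    rwa [coe_coe, ← mul_apply_eq_comp, he.mul_one_sub_self, zero_apply, inner_zero_right] at this
  have hsum : e x + (1 - e) x = x := by rw [← add_apply, add_sub_cancel, one_apply_eq_self]
  have := norm_add_sq_eq_norm_sq_add_norm_sq_of_inner_eq_zero _ _ horth
  rw [hsum] at this
  simpa only [sq] using this.symm

theorem IsStarProjection.norm_sub_le_max (he : IsStarProjection e) (hf : IsStarProjection f) :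
    ‖e - f‖ ≤ max ‖e * (1 - f)‖ ‖(1 - e) * f‖ := by
  set M := max ‖e * (1 - f)‖ ‖(1 - e) * f‖
  have hM : 0 ≤ M := le_max_of_le_left (norm_nonneg _)
  refine opNorm_le_bound _ hM fun x => ?_
  have ha : ‖(e * (1 - f)) x‖ ≤ M * ‖(1 - f) x‖ :=
    calc ‖(e * (1 - f)) x‖ = ‖(e * (1 - f)) ((1 - f) x)‖ := by
          rw [← mul_apply_eq_comp, mul_assoc, hf.one_sub.isIdempotentElem.eq]
      _ ≤ M * ‖(1 - f) x‖ := (le_opNorm _ _).trans (by gcongr; exact le_max_left _ _)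
  have hb : ‖((1 - e) * f) x‖ ≤ M * ‖f x‖ :=
    calc ‖((1 - e) * f) x‖ = ‖((1 - e) * f) (f x)‖ := by
          rw [← mul_apply_eq_comp, mul_assoc, hf.isIdempotentElem.eq]
      _ ≤ M * ‖f x‖ := (le_opNorm _ _).trans (by gcongr; exact le_max_right _ _)
  have he₁ : e * (e - f) = e * (1 - f) := by
    rw [mul_sub, mul_sub, mul_one, he.isIdempotentElem.eq]
  have he₂ : (1 - e) * (e - f) = -((1 - e) * f) := by
    rw [mul_sub, he.one_sub_mul_self, zero_sub]
  have hsq : ‖(e - f) x‖ ^ 2 ≤ (M * ‖x‖) ^ 2 :=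
    calc ‖(e - f) x‖ ^ 2 = ‖(e * (1 - f)) x‖ ^ 2 + ‖((1 - e) * f) x‖ ^ 2 := by
          rw [← he.norm_apply_sq_add_norm_one_sub_apply_sq, ← mul_apply_eq_comp,
            ← mul_apply_eq_comp, he₁, he₂, neg_apply, norm_neg]
      _ ≤ (M * ‖(1 - f) x‖) ^ 2 + (M * ‖f x‖) ^ 2 := by gcongr
      _ = (M * ‖x‖) ^ 2 := by
          rw [mul_pow, mul_pow, mul_pow, ← hf.norm_apply_sq_add_norm_one_sub_apply_sq x]; ring
  exact (pow_le_pow_iff_left₀ (norm_nonneg _) (by positivity) two_ne_zero).mp hsq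

theorem IsStarProjection.norm_sub_lt_one_of_mul_eq_of_mul_eq (he : IsStarProjection e)
    (hf' : IsStarProjection f') (hee' : e * e' = e) (hff' : f * f' = f') (h : ‖e - f‖ < 1)
    (h' : ‖e' - f'‖ < 1) : ‖e - f'‖ < 1 := by
  refine (he.norm_sub_le_max hf').trans_lt (max_lt ?_ ?_)
  · calc ‖e * (1 - f')‖ = ‖e * (e' * (1 - f'))‖ := by rw [← mul_assoc, hee']
      _ ≤ ‖e' * (1 - f')‖ :=
          (norm_mul_le _ _).trans (mul_le_of_le_one_left (norm_nonneg _) (he.norm_le _))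
      _ < 1 := hf'.norm_mul_one_sub_le.trans_lt h'
  · calc ‖(1 - e) * f'‖ = ‖(1 - e) * f * f'‖ := by rw [mul_assoc, hff']
      _ ≤ ‖(1 - e) * f‖ :=
          (norm_mul_le _ _).trans (mul_le_of_le_one_right (norm_nonneg _) (hf'.norm_le _))
      _ < 1 := he.norm_one_sub_mul_le.trans_lt h

end HilbertSpace

namespace IsNest
variable {H : Type*} [NormedAddCommGroup H] [InnerProductSpace ℂ H] [CompleteSpace H]
  {𝒨 𝒩 : Set (H →L[ℂ] H)}

theorem isStarProjection (hN : IsNest 𝒩) {P : H →L[ℂ] H} (hP : P ∈ 𝒩) : IsStarProjection P :=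
  ⟨hN.idem P hP, hN.selfAdjoint P hP⟩

theorem isBounded (hN : IsNest 𝒩) : Bornology.IsBounded 𝒩 :=
  (Metric.isBounded_closedBall (x := 0) (r := 1)).subset fun P hP => by
    simpa using (hN.isStarProjection hP).norm_le P

theorem eq_of_norm_sub_lt_one (hN : IsNest 𝒩) {E Q₁ Q₂ : H →L[ℂ] H} (hE : IsStarProjection E)
    (hQ₁ : Q₁ ∈ 𝒩) (hQ₂ : Q₂ ∈ 𝒩) (h₁ : ‖E - Q₁‖ < 1) (h₂ : ‖E - Q₂‖ < 1) : Q₁ = Q₂ := by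
  rcases hN.chain Q₁ hQ₁ Q₂ hQ₂ with h | h
  · exact hE.eq_of_mul_eq_of_norm_sub_lt_one (hN.isStarProjection hQ₁)
      (hN.isStarProjection hQ₂) h h₁ h₂
  · exact (hE.eq_of_mul_eq_of_norm_sub_lt_one (hN.isStarProjection hQ₂)
      (hN.isStarProjection hQ₁) h h₂ h₁).symm

theorem exists_norm_sub_lt_one (hM : IsNest 𝒨) (hN : IsNest 𝒩)
    (hdist : Metric.hausdorffDist 𝒨 𝒩 < 1) {P : H →L[ℂ] H} (hP : P ∈ 𝒨) :
    ∃ Q ∈ 𝒩, ‖P - Q‖ < 1 := by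
  have hfin := Metric.hausdorffEDist_ne_top_of_nonempty_of_bounded ⟨0, hM.zero_mem⟩
    ⟨0, hN.zero_mem⟩ hM.isBounded hN.isBounded
  obtain ⟨Q, hQ, hPQ⟩ := Metric.exists_dist_lt_of_hausdorffDist_lt hP hdist hfin
  exact ⟨Q, hQ, by rwa [← dist_eq_norm]⟩

theorem comp_eq_of_comp_eq_of_norm_sub_lt_one (hM : IsNest 𝒨) (hN : IsNest 𝒩)
    {P P' Q Q' : H →L[ℂ] H} (hP : P ∈ 𝒨) (hP' : P' ∈ 𝒨) (hQ : Q ∈ 𝒩) (hQ' : Q' ∈ 𝒩)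
    (hPQ : ‖P - Q‖ < 1) (hPQ' : ‖P' - Q'‖ < 1) (hle : P' ∘L P = P) : Q' ∘L Q = Q := by
  rcases hN.chain Q hQ Q' hQ' with h | h
  · exact h
  have hP'' : P * P' = P := (hM.selfAdjoint P hP).mul_eq_right_of_mul_eq_left
    (hM.selfAdjoint P' hP') hle
  have hPQ'' : ‖P - Q'‖ < 1 := (hM.isStarProjection hP).norm_sub_lt_one_of_mul_eq_of_mul_eq
    (hN.isStarProjection hQ') hP'' h hPQ hPQ'
  rw [hN.eq_of_norm_sub_lt_one (hM.isStarProjection hP) hQ' hQ hPQ'' hPQ]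
  exact hN.idem Q hQ

end IsNest

/-- If nests `𝒨`, `𝒩` are at Hausdorff distance `< 1`, then each `P ∈ 𝒨` is at distance
`< 1` from a unique `Q ∈ 𝒩`, and any map `θ` realizing this correspondence is an
order-preserving bijection of `𝒨` onto `𝒩`. -/
theorem stmt11 {H : Type*} [NormedAddCommGroup H] [InnerProductSpace ℂ H]
    [CompleteSpace H]
    (𝒨 𝒩 : Set (H →L[ℂ] H)) (hM : IsNest 𝒨) (hN : IsNest 𝒩)
    (hdist : Metric.hausdorffDist 𝒨 𝒩 < 1) :
    (∀ P ∈ 𝒨, ∃! Q, Q ∈ 𝒩 ∧ ‖P - Q‖ < 1) ∧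
      ∀ θ : (H →L[ℂ] H) → (H →L[ℂ] H),
        (∀ P ∈ 𝒨, θ P ∈ 𝒩 ∧ ‖P - θ P‖ < 1) →
        Set.BijOn θ 𝒨 𝒩 ∧
          ∀ P ∈ 𝒨, ∀ P' ∈ 𝒨, P' ∘L P = P → θ P' ∘L θ P = θ P := by
  refine ⟨fun P hP => ?_, fun θ hθ => ⟨⟨fun P hP => (hθ P hP).1, ?_, ?_⟩, ?_⟩⟩
  · obtain ⟨Q, hQ, hPQ⟩ := hM.exists_norm_sub_lt_one hN hdist hP
    exact ⟨Q, ⟨hQ, hPQ⟩, fun Q' hQ' =>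
      hN.eq_of_norm_sub_lt_one (hM.isStarProjection hP) hQ'.1 hQ hQ'.2 hPQ⟩
  · intro P hP P' hP' hθP
    refine hM.eq_of_norm_sub_lt_one (hN.isStarProjection (hθ P hP).1) hP hP' ?_ ?_
    · rw [norm_sub_rev]; exact (hθ P hP).2
    · rw [hθP, norm_sub_rev]; exact (hθ P' hP').2
  · intro Q hQ
    rw [Metric.hausdorffDist_comm] at hdist
    obtain ⟨P, hP, hQP⟩ := hN.exists_norm_sub_lt_one hM hdist hQ
    refine ⟨P, hP, hN.eq_of_norm_sub_lt_one (hM.isStarProjection hP) (hθ P hP).1 hQ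
      (hθ P hP).2 ?_⟩
    rwa [norm_sub_rev]
  · intro P hP P' hP' hle
    exact hM.comp_eq_of_comp_eq_of_norm_sub_lt_one hN hP hP' (hθ P hP).1 (hθ P' hP').1
      (hθ P hP).2 (hθ P' hP').2 hle
end

section
/- Let M, N be nests on H. For any P ∈ M and Q ∈ N, with Q₊ denoting the successor projection of Q in N, the Kadison–Kastler distance satisfies d(T(M), T(N)) ≥ ‖Pᗮ Q₊‖ · ‖P Qᗮ‖. -/
/-!
For `ζ ∈ ran Q₊` and `η ⊥ ran Q`, the rank-one operator `ζη*` lies in `T(𝒩)`: nest projections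
`Q' ≤ Q` annihilate `η`, and every `Q' > Q` dominates `Q₊`, hence fixes `ζ`. Every `A ∈ T(𝓜)`
satisfies `Pᗮ A P = 0`, so `‖ζη* - A‖ ≥ ‖Pᗮ ζη* P‖ = ‖Pᗮζ‖ ‖Pη‖`. Taking `ζ = Q₊x`, `η = Qᗮy`
and the supremum over unit vectors `x`, `y` gives `‖Pᗮ Q₊‖ ‖P Qᗮ‖`.
-/

open ContinuousLinearMap

/-- The nest algebra of a nest `𝒩`: all operators leaving every subspace of the nest
invariant, i.e. `(1 - P) A P = 0` for all `P ∈ 𝒩`. -/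
def nestAlg {H : Type*} [NormedAddCommGroup H] [InnerProductSpace ℂ H]
    [CompleteSpace H] (𝒩 : Set (H →L[ℂ] H)) : Set (H →L[ℂ] H) :=
  {A | ∀ P ∈ 𝒩, (1 - P) ∘L A ∘L P = 0}

/-- The Kadison–Kastler distance between two sets of operators:
`max (sup_{A ∈ b₁(𝒜)} d(A, ℬ)) (sup_{B ∈ b₁(ℬ)} d(B, 𝒜))`. -/
noncomputable def kkDist {H : Type*} [NormedAddCommGroup H] [InnerProductSpace ℂ H]
    [CompleteSpace H] (𝒜 ℬ : Set (H →L[ℂ] H)) : ℝ :=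
  max (⨆ T : {T : H →L[ℂ] H // T ∈ 𝒜 ∧ ‖T‖ ≤ 1}, Metric.infDist T.1 ℬ)
      (⨆ T : {T : H →L[ℂ] H // T ∈ ℬ ∧ ‖T‖ ≤ 1}, Metric.infDist T.1 𝒜)


open InnerProductSpace

namespace ContinuousLinearMap

variable {𝕜 E F G K : Type*} [RCLike 𝕜]
  [NormedAddCommGroup E] [NormedSpace 𝕜 E] [SeminormedAddCommGroup F] [NormedSpace 𝕜 F]
  [NormedAddCommGroup G] [NormedSpace 𝕜 G] [SeminormedAddCommGroup K] [NormedSpace 𝕜 K]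

theorem opNorm_le_of_forall_norm_le_one {f : E →L[𝕜] F} {c : ℝ}
    (h : ∀ x, ‖x‖ ≤ 1 → ‖f x‖ ≤ c) : ‖f‖ ≤ c := by
  rw [← sSup_unitClosedBall_eq_norm]
  refine csSup_le ((Metric.nonempty_closedBall.2 zero_le_one).image _) ?_
  rintro _ ⟨x, hx, rfl⟩
  exact h x (mem_closedBall_zero_iff.1 hx)

theorem opNorm_mul_opNorm_le_of_forall_norm_le_one {f : E →L[𝕜] F} {g : G →L[𝕜] K} {c : ℝ}
    (h : ∀ x y, ‖x‖ ≤ 1 → ‖y‖ ≤ 1 → ‖f x‖ * ‖g y‖ ≤ c) : ‖f‖ * ‖g‖ ≤ c := by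
  have key (x : E) (hx : ‖x‖ ≤ 1) : ‖f x‖ * ‖g‖ ≤ c := by
    have : ‖(‖f x‖ : 𝕜) • g‖ ≤ c := opNorm_le_of_forall_norm_le_one fun y hy => by
      simpa [norm_smul] using h x y hx hy
    simpa [norm_smul] using this
  have : ‖(‖g‖ : 𝕜) • f‖ ≤ c := opNorm_le_of_forall_norm_le_one fun x hx => by
    simpa [norm_smul, mul_comm] using key x hx
  simpa [norm_smul, mul_comm] using this

end ContinuousLinearMap

section NestAlgebra

variable {H : Type*} [NormedAddCommGroup H] [InnerProductSpace ℂ H] [CompleteSpace H]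

theorem IsNest.isStarProjection_s14 {𝒩 : Set (H →L[ℂ] H)} (h𝒩 : IsNest 𝒩) {P : H →L[ℂ] H}
    (hP : P ∈ 𝒩) : IsStarProjection P :=
  ⟨h𝒩.idem P hP, h𝒩.selfAdjoint P hP⟩

theorem IsStarProjection.apply_apply {P : H →L[ℂ] H} (hP : IsStarProjection P) (x : H) :
    P (P x) = P x :=
  congr($(hP.isIdempotentElem.eq) x)

theorem IsStarProjection.apply_one_sub_apply {P : H →L[ℂ] H} (hP : IsStarProjection P)
    (x : H) : P ((1 - P) x) = 0 := by
  rw [sub_apply, one_apply_eq_self, map_sub, hP.apply_apply, sub_self]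

theorem IsStarProjection.norm_apply_le {P : H →L[ℂ] H} (hP : IsStarProjection P) (x : H) :
    ‖P x‖ ≤ ‖x‖ :=
  (P.le_opNorm x).trans (mul_le_of_le_one_left (norm_nonneg x) hP.norm_le)

theorem zero_mem_nestAlg (𝒩 : Set (H →L[ℂ] H)) : 0 ∈ nestAlg 𝒩 := fun P _ => by
  simp

theorem infDist_le_kkDist_right {𝒜 ℬ : Set (H →L[ℂ] H)} (h𝒜 : 0 ∈ 𝒜) {T : H →L[ℂ] H}
    (hT : T ∈ ℬ) (hT₁ : ‖T‖ ≤ 1) : Metric.infDist T 𝒜 ≤ kkDist 𝒜 ℬ := by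
  have hbdd : BddAbove (Set.range fun S : {S : H →L[ℂ] H // S ∈ ℬ ∧ ‖S‖ ≤ 1} =>
      Metric.infDist S.1 𝒜) := by
    refine ⟨1, ?_⟩
    rintro _ ⟨S, rfl⟩
    calc Metric.infDist S.1 𝒜 ≤ dist S.1 0 := Metric.infDist_le_dist_of_mem h𝒜
      _ ≤ 1 := by simpa using S.2.2
  exact (le_ciSup hbdd ⟨T, hT, hT₁⟩).trans (le_max_right _ _)

theorem norm_compress_le_of_isStarProjection {P : H →L[ℂ] H} (hP : IsStarProjection P)
    (T : H →L[ℂ] H) : ‖(1 - P) ∘L T ∘L P‖ ≤ ‖T‖ :=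
  calc ‖(1 - P) ∘L T ∘L P‖ ≤ ‖1 - P‖ * (‖T‖ * ‖P‖) :=
        (opNorm_comp_le _ _).trans (by gcongr; exact opNorm_comp_le _ _)
    _ ≤ 1 * (‖T‖ * 1) := by
        gcongr
        exacts [hP.one_sub.norm_le, hP.norm_le]
    _ = ‖T‖ := by ring

theorem norm_compress_le_infDist_nestAlg {𝒨 : Set (H →L[ℂ] H)} {P : H →L[ℂ] H}
    (hP : IsStarProjection P) (hP𝒨 : P ∈ 𝒨) (T : H →L[ℂ] H) :
    ‖(1 - P) ∘L T ∘L P‖ ≤ Metric.infDist T (nestAlg 𝒨) := by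
  refine (Metric.le_infDist ⟨0, zero_mem_nestAlg 𝒨⟩).2 fun A hA => ?_
  have hcorner : (1 - P) ∘L T ∘L P = (1 - P) ∘L (T - A) ∘L P := by
    simp only [sub_comp, comp_sub, hA P hP𝒨, sub_zero]
  rw [hcorner, dist_eq_norm]
  exact norm_compress_le_of_isStarProjection hP _

theorem rankOne_mem_nestAlg {𝒩 : Set (H →L[ℂ] H)} (h𝒩 : IsNest 𝒩) {Q Qp : H →L[ℂ] H}
    (hQ : Q ∈ 𝒩) (hsucc : ∀ Q' ∈ 𝒩, Q' ∘L Q = Q → Q' ≠ Q → Q' ∘L Qp = Qp)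
    {ζ η : H} (hζ : Qp ζ = ζ) (hη : Q η = 0) : rankOne ℂ ζ η ∈ nestAlg 𝒩 := by
  intro Q' hQ'
  by_cases hgt : Q' ∘L Q = Q ∧ Q' ≠ Q
  · have hζ' : Q' ζ = ζ := by
      rw [← hζ, ← comp_apply, hsucc Q' hQ' hgt.1 hgt.2]
    rw [← comp_assoc, comp_rankOne, sub_apply, hζ', one_apply_eq_self, sub_self, map_zero,
      zero_apply, zero_comp]
  · have hle : Q ∘L Q' = Q' := by
      rcases h𝒩.chain Q' hQ' Q hQ with h | h
      · exact h
      · obtain rfl : Q' = Q := by tauto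
        exact h𝒩.idem Q' hQ'
    have hQ'sa := h𝒩.selfAdjoint Q' hQ'
    have hη' : Q' η = 0 := by
      have hcomm := IsSelfAdjoint.commute_of_mul_eq_isSelfAdjoint Q Q' Q'
        (h𝒩.selfAdjoint Q hQ) hQ'sa hQ'sa hle
      rw [← hle, ← mul_def, hcomm.eq, mul_def, comp_apply, hη, map_zero]
    rw [rankOne_comp, isSelfAdjoint_iff'.1 hQ'sa, hη', map_zero, comp_zero]

end NestAlgebra

theorem stmt14_general {H : Type*} [NormedAddCommGroup H] [InnerProductSpace ℂ H]
    [CompleteSpace H]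
    (𝒨 𝒩 : Set (H →L[ℂ] H)) (hM : IsNest 𝒨) (hN : IsNest 𝒩)
    (P Q Qp : H →L[ℂ] H) (hP : P ∈ 𝒨) (hQ : Q ∈ 𝒩) (hQp : Qp ∈ 𝒩)
    (hsucc : ∀ Q' ∈ 𝒩, Q' ∘L Q = Q → Q' ≠ Q → Q' ∘L Qp = Qp) :
    ‖(1 - P) ∘L Qp‖ * ‖P ∘L (1 - Q)‖ ≤ kkDist (nestAlg 𝒨) (nestAlg 𝒩) := by
  have hPproj := hM.isStarProjection_s14 hP
  have hQproj := hN.isStarProjection_s14 hQ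
  have hQpproj := hN.isStarProjection_s14 hQp
  refine opNorm_mul_opNorm_le_of_forall_norm_le_one fun x y hx hy => ?_
  set T := rankOne ℂ (Qp x) ((1 - Q) y)
  have hTmem : T ∈ nestAlg 𝒩 := rankOne_mem_nestAlg hN hQ hsucc
    (hQpproj.apply_apply x) (hQproj.apply_one_sub_apply y)
  have hT₁ : ‖T‖ ≤ 1 := by
    rw [norm_rankOne]
    exact mul_le_one₀ ((hQpproj.norm_apply_le x).trans hx) (norm_nonneg _)
      ((hQproj.one_sub.norm_apply_le y).trans hy)
  calc ‖((1 - P) ∘L Qp) x‖ * ‖(P ∘L (1 - Q)) y‖ = ‖(1 - P) ∘L T ∘L P‖ := by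
        rw [← comp_assoc, comp_rankOne, rankOne_comp, isSelfAdjoint_iff'.1 hPproj.isSelfAdjoint,
          norm_rankOne]
        rfl
    _ ≤ Metric.infDist T (nestAlg 𝒨) := norm_compress_le_infDist_nestAlg hPproj hP T
    _ ≤ kkDist (nestAlg 𝒨) (nestAlg 𝒩) := infDist_le_kkDist_right (zero_mem_nestAlg 𝒨) hTmem hT₁

/-- Lower bound for the Kadison–Kastler distance between nest algebras: for `P ∈ 𝒨`,
`Q ∈ 𝒩` with successor `Q₊` of `Q` in `𝒩`,
`‖Pᗮ Q₊‖ ⬝ ‖P Qᗮ‖ ≤ d(𝒯(𝒨), 𝒯(𝒩))`. -/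
theorem stmt14 {H : Type*} [NormedAddCommGroup H] [InnerProductSpace ℂ H]
    [CompleteSpace H]
    (𝒨 𝒩 : Set (H →L[ℂ] H)) (hM : IsNest 𝒨) (hN : IsNest 𝒩)
    (P Q Qp : H →L[ℂ] H) (hP : P ∈ 𝒨) (hQ : Q ∈ 𝒩) (hQp : Qp ∈ 𝒩)
    (hQle : Qp ∘L Q = Q)
    (hsucc : ∀ Q' ∈ 𝒩, Q' ∘L Q = Q → Q' ≠ Q → Q' ∘L Qp = Qp) :
    ‖(1 - P) ∘L Qp‖ * ‖P ∘L (1 - Q)‖ ≤ kkDist (nestAlg 𝒨) (nestAlg 𝒩) :=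
  stmt14_general 𝒨 𝒩 hM hN P Q Qp hP hQ hQp hsucc
end
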